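/- arXiv:1712.07851 — 9 statements merged into one kernel-verified Lean document; each statement's English description precedes it below -/
import Mathlib

section
/- Let 𝒳 ⊆ mod Γ be a d-cluster tilting subcategory and X ∈ 𝒳 with minimal projective resolution ⋯ → P₂ →^{f₂} P₁ →^{f₁} P₀ → X → 0. Then for 2 ≤ j ≤ d the morphism f_j is left minimal; and if X has no non-zero projective summands, then f₁ is left minimal. -/
noncomputable section
open CategoryTheory CategoryTheory.Limits

def ExtVanish (R : Type) [Ring R] (A B : ModuleCat R) (i : ℕ) : Prop :=
  Subsingleton (((Ext ℤ (ModuleCat R) i).obj (Opposite.op A)).obj B)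

/-- A full subcategory (given by a set of objects) of `mod Γ` is `d`-cluster tilting. -/
structure IsdClusterTilting (Γ : Type) [Ring Γ] (d : ℕ) (𝒳 : Set (ModuleCat Γ)) : Prop where
  finite : ∀ X ∈ 𝒳, Module.Finite Γ X
  mem_iff_ext_out : ∀ X : ModuleCat Γ, Module.Finite Γ X →
    (X ∈ 𝒳 ↔ ∀ Y ∈ 𝒳, ∀ i, 1 ≤ i → i ≤ d - 1 → ExtVanish Γ X Y i)
  mem_iff_ext_in : ∀ X : ModuleCat Γ, Module.Finite Γ X →
    (X ∈ 𝒳 ↔ ∀ Y ∈ 𝒳, ∀ i, 1 ≤ i → i ≤ d - 1 → ExtVanish Γ Y X i)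
  left_approx : ∀ M : ModuleCat Γ, Module.Finite Γ M →
    ∃ A ∈ 𝒳, ∃ f : M ⟶ A, ∀ B ∈ 𝒳, ∀ g : M ⟶ B, ∃ h : A ⟶ B, f ≫ h = g
  right_approx : ∀ M : ModuleCat Γ, Module.Finite Γ M →
    ∃ A ∈ 𝒳, ∃ f : A ⟶ M, ∀ B ∈ 𝒳, ∀ g : B ⟶ M, ∃ h : B ⟶ A, h ≫ f = g

/-- An augmented minimal projective resolution `⋯ → P₁ → P₀ → X → 0`. -/
structure MinProjRes (Γ : Type) [Ring Γ] (X : ModuleCat Γ) where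
  P : ℕ → ModuleCat Γ
  proj : ∀ n, Projective (P n)
  pr : P 0 ⟶ X
  δ : ∀ n, P (n + 1) ⟶ P n
  epi : Function.Surjective pr
  exact0 : Function.Exact (δ 0) pr
  exact : ∀ n, Function.Exact (δ (n + 1)) (δ n)
  min0 : ∀ g : P 0 ⟶ P 0, g ≫ pr = pr → IsIso g
  min : ∀ n, ∀ g : P (n + 1) ⟶ P (n + 1), g ≫ δ n = δ n → IsIso g

/-- The `i`-th syzygy of `X` defined by a minimal projective resolution. -/
def MinProjRes.syz {Γ : Type} [Ring Γ] {X : ModuleCat Γ} (R : MinProjRes Γ X) :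
    ℕ → ModuleCat Γ
  | 0 => X
  | 1 => ModuleCat.of Γ (LinearMap.ker R.pr.hom)
  | (n + 2) => ModuleCat.of Γ (LinearMap.ker (R.δ n).hom)

/-- `W` has no non-zero projective direct summand. -/
def NoNonzeroProjSummand (Γ : Type) [Ring Γ] (W : ModuleCat Γ) : Prop :=
  ∀ Q : ModuleCat Γ, Projective Q →
    (∃ (s : Q ⟶ W) (r : W ⟶ Q), s ≫ r = 𝟙 Q) → Limits.IsZero Q

/-! ### Auxiliary lemmas -/

universe v

section Aux

variable {Γ : Type} [Ring Γ]

lemma aux_subsingleton_of_isZero {S : Type} [Ring S] {M : ModuleCat.{v} S} (h : IsZero M) :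
    Subsingleton M := by
  refine subsingleton_of_forall_eq 0 fun x => ?_
  have h1 : (𝟙 M : M ⟶ M) = 0 := h.eq_of_src _ _
  calc x = (𝟙 M : M ⟶ M) x := rfl
    _ = (0 : M ⟶ M) x := by rw [h1]
    _ = 0 := rfl

lemma aux_projective_of_retract {P K : ModuleCat.{v} Γ} (hP : Projective P) (s : K ⟶ P)
    (r : P ⟶ K) (hsr : s ≫ r = 𝟙 K) : Projective K := by
  constructor
  intro A Y f e he
  haveI := he
  obtain ⟨l, hl⟩ := hP.factors (r ≫ f) e
  exact ⟨s ≫ l, by rw [Category.assoc, hl, ← Category.assoc, hsr, Category.id_comp]⟩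

/-- A projective module with a right-minimal surjection onto a finite module is finite. -/
lemma aux_finite_of_min {P M : ModuleCat.{v} Γ} (hP : Projective P)
    (f : P ⟶ M) (hf : Function.Surjective f) (hM : Module.Finite Γ M)
    (hmin : ∀ g : P ⟶ P, g ≫ f = f → IsIso g) : Module.Finite Γ P := by
  obtain ⟨n, q₀, hq₀⟩ := Module.Finite.exists_fin' Γ M
  let P' : ModuleCat.{v} Γ := ModuleCat.of Γ (ULift.{v} (Fin n → Γ))
  have hP' : Projective P' := ModuleCat.projective_of_free
    ((Pi.basisFun Γ (Fin n)).map (ULift.moduleEquiv).symm)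
  let q : P' ⟶ M := ModuleCat.ofHom (q₀ ∘ₗ (ULift.moduleEquiv : ULift.{v} (Fin n → Γ) ≃ₗ[Γ] _).toLinearMap)
  have hq : Function.Surjective q := hq₀.comp (ULift.moduleEquiv).surjective
  haveI : Epi f := (ModuleCat.epi_iff_surjective f).mpr hf
  haveI : Epi q := (ModuleCat.epi_iff_surjective q).mpr hq
  haveI := hP'
  haveI := hP
  let a : P' ⟶ P := Projective.factorThru q f
  have ha : a ≫ f = q := Projective.factorThru_comp q f
  let b : P ⟶ P' := Projective.factorThru f q
  have hb : b ≫ q = f := Projective.factorThru_comp f q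
  have hg : (b ≫ a) ≫ f = f := by rw [Category.assoc, ha, hb]
  haveI := hmin (b ≫ a) hg
  have hsurj : Function.Surjective a := by
    intro y
    have hepi : Function.Surjective (b ≫ a) := by
      rw [← ModuleCat.epi_iff_surjective]; infer_instance
    obtain ⟨z, hz⟩ := hepi y
    exact ⟨b z, hz⟩
  haveI : Module.Finite Γ P' :=
    Module.Finite.of_surjective (ULift.moduleEquiv.symm.toLinearMap :
      (Fin n → Γ) →ₗ[Γ] P') (ULift.moduleEquiv.symm.surjective)
  exact Module.Finite.of_surjective (a.hom : P' →ₗ[Γ] P) hsurj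

lemma MinProjRes.P_finite [IsNoetherianRing Γ] {X : ModuleCat.{v} Γ} (R : MinProjRes Γ X)
    (hX : Module.Finite Γ X) : ∀ n, Module.Finite Γ (R.P n) := by
  intro n
  induction n with
  | zero => exact aux_finite_of_min (R.proj 0) R.pr R.epi hX R.min0
  | succ n ih =>
    haveI : Module.Finite Γ (R.P n) := ih
    have hMfin : Module.Finite Γ (LinearMap.range ((R.δ n).hom : R.P (n+1) →ₗ[Γ] R.P n)) :=
      Module.Finite.iff_fg.mpr (IsNoetherian.noetherian _)
    refine aux_finite_of_min (R.proj (n+1))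
      (ModuleCat.ofHom (((R.δ n).hom : R.P (n+1) →ₗ[Γ] R.P n).rangeRestrict))
      (LinearMap.surjective_rangeRestrict _) hMfin ?_
    intro g hg
    refine R.min n g ?_
    ext x
    exact congrArg Subtype.val (ConcreteCategory.congr_hom hg x)

variable {X : ModuleCat.{v} Γ} (R : MinProjRes Γ X)

/-- The chain complex underlying a minimal projective resolution. -/
def MinProjRes.cx : ChainComplex (ModuleCat.{v} Γ) ℕ :=
  ChainComplex.of R.P R.δ (fun n => by
    ext x
    exact (R.exact n).apply_apply_eq_zero x)

lemma MinProjRes.cx_d (n : ℕ) : R.cx.d (n+1) n = R.δ n := by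
  simp [MinProjRes.cx]

lemma MinProjRes.cx_X (n : ℕ) : R.cx.X n = R.P n := rfl

lemma MinProjRes.cx_exactAt (n : ℕ) : R.cx.ExactAt (n+1) := by
  rw [HomologicalComplex.exactAt_iff' _ (n+2) (n+1) n (by simp) (by simp)]
  rw [ShortComplex.moduleCat_exact_iff]
  intro x hx
  have hg : (R.cx.sc' (n+2) (n+1) n).g = R.cx.d (n+1) n := rfl
  rw [hg, R.cx_d n] at hx
  obtain ⟨y, hy⟩ := ((R.exact n) x).mp hx
  refine ⟨y, ?_⟩
  have h1 : R.cx.d (n+2) (n+1) y = x := by rw [R.cx_d (n+1)]; exact hy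
  exact h1

/-- The augmentation as a map to the single complex. -/
def MinProjRes.resπ : R.cx ⟶ (ChainComplex.single₀ (ModuleCat.{v} Γ)).obj X :=
  (ChainComplex.toSingle₀Equiv _ _).symm ⟨R.pr, by
    rw [R.cx_d 0]
    ext x
    exact R.exact0.apply_apply_eq_zero x⟩

lemma MinProjRes.resπ_f0 : R.resπ.f 0 = R.pr :=
  ChainComplex.toSingle₀Equiv_symm_apply_f_zero _ _

/-- A `MinProjRes` gives a mathlib `ProjectiveResolution`. -/
def MinProjRes.res : ProjectiveResolution X where
  complex := R.cx
  projective := R.proj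
  π := R.resπ
  quasiIso := ⟨fun n => by
    cases n with
    | zero =>
      rw [ChainComplex.quasiIsoAt₀_iff, ShortComplex.quasiIso_iff_of_zeros']
      · constructor
        · rw [ShortComplex.moduleCat_exact_iff]
          intro x hx
          have hx' : R.pr x = 0 := by
            rw [← R.resπ_f0]; exact hx
          obtain ⟨y, hy⟩ := (R.exact0 x).mp hx'
          refine ⟨y, ?_⟩
          have h1 : R.cx.d 1 0 y = x := by rw [R.cx_d 0]; exact hy
          exact h1
        · have h2 : Epi (R.resπ.f 0) := by
            rw [R.resπ_f0]; exact (ModuleCat.epi_iff_surjective _).mpr R.epi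
          exact h2
      all_goals rfl
    | succ n =>
      rw [quasiIsoAt_iff_exactAt']
      · exact R.cx_exactAt n
      · apply ChainComplex.exactAt_succ_single_obj⟩

/-- Concrete consequence of Ext-vanishing: cocycles are coboundaries for `Hom(P_•, K)`. -/
lemma MinProjRes.lift_of_extVanish {K : ModuleCat.{v} Γ} (m : ℕ)
    (hsub : Subsingleton (((Ext ℤ (ModuleCat.{v} Γ) (m+1)).obj (Opposite.op X)).obj K))
    (ψ : R.P (m+1) ⟶ K) (hψ : R.δ (m+1) ≫ ψ = 0) : ∃ χ : R.P m ⟶ K, R.δ m ≫ χ = ψ := by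
  have e := (R.res.isoExt (m+1) K :
      ((Ext ℤ (ModuleCat.{v} Γ) (m+1)).obj (Opposite.op X)).obj K ≅
      (R.cx.linearYonedaObj ℤ K).homology (m+1))
  haveI : Subsingleton ((R.cx.linearYonedaObj ℤ K).homology (m+1)) := by
    have hsurj : Function.Surjective e.hom := fun y =>
      ⟨e.inv y, ConcreteCategory.congr_hom e.inv_hom_id y⟩
    exact hsurj.subsingleton
  have hzero : IsZero ((R.cx.linearYonedaObj ℤ K).homology (m+1)) :=
    ModuleCat.isZero_of_subsingleton _
  have hexact : (R.cx.linearYonedaObj ℤ K).ExactAt (m+1) :=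
    (HomologicalComplex.exactAt_iff_isZero_homology _ _).mpr hzero
  rw [HomologicalComplex.exactAt_iff' _ m (m+1) (m+2) (by simp) (by simp)] at hexact
  rw [ShortComplex.moduleCat_exact_iff] at hexact
  have hψ' : ((R.cx.linearYonedaObj ℤ K).sc' m (m+1) (m+2)).g ψ = 0 := by
    have h3 : R.cx.d (m+2) (m+1) ≫ ψ = 0 := by rw [R.cx_d (m+1)]; exact hψ
    exact h3
  obtain ⟨χ, hχ⟩ := hexact ψ hψ'
  refine ⟨χ, ?_⟩
  have h4 : R.cx.d (m+1) m ≫ χ = ψ := hχ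
  rwa [R.cx_d m] at h4

end Aux


section Aux2

variable {Γ : Type} [Ring Γ]

lemma aux_isIso_of_bijective {P Q : ModuleCat.{v} Γ} (g : P ⟶ Q)
    (h : Function.Bijective g) : IsIso g := by
  let e := LinearEquiv.ofBijective (g.hom : P →ₗ[Γ] Q) h
  refine ⟨⟨ModuleCat.ofHom e.symm.toLinearMap, ?_, ?_⟩⟩
  · ext x; exact e.symm_apply_apply x
  · ext x; exact e.apply_symm_apply x

lemma aux_injective_of_isIso {P Q : ModuleCat.{v} Γ} (g : P ⟶ Q) [IsIso g] :
    Function.Injective g := by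
  intro x y hxy
  have h1 := ConcreteCategory.congr_hom (IsIso.hom_inv_id g)
  calc x = (inv g) (g x) := (h1 x).symm
    _ = (inv g) (g y) := by rw [hxy]
    _ = y := h1 y

/-- The Fitting decomposition, packaged for our use. -/
lemma aux_fitting [IsNoetherianRing Γ] [IsArtinianRing Γ] {P : ModuleCat.{v} Γ}
    (hfin : Module.Finite Γ P) (gl : P →ₗ[Γ] P) (M : Submodule Γ P)
    (hfix : ∀ x ∈ M, gl x = x) :
    ∃ n, 1 ≤ n ∧ IsCompl (LinearMap.ker (gl ^ n)) (LinearMap.range (gl ^ n))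
      ∧ M ≤ LinearMap.range (gl ^ n)
      ∧ (LinearMap.ker (gl ^ n) = ⊥ → Function.Bijective gl) := by
  haveI := hfin
  obtain ⟨N, hN⟩ := Filter.eventually_atTop.mp gl.eventually_isCompl_ker_pow_range_pow
  refine ⟨max N 1, le_max_right _ _, hN _ (le_max_left _ _), ?_, ?_⟩
  · intro x hx
    exact ⟨x, by rw [Module.End.pow_apply]; exact Function.iterate_fixed (hfix x hx) _⟩
  · intro hker
    obtain ⟨m, hm⟩ : ∃ m, max N 1 = m + 1 :=
      Nat.exists_eq_succ_of_ne_zero (by omega : max N 1 ≠ 0)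
    constructor
    · rw [← LinearMap.ker_eq_bot]
      rw [eq_bot_iff]
      intro x hx
      have hx' : gl x = 0 := hx
      have h2 : (gl ^ max N 1) x = 0 := by
        rw [Module.End.pow_apply, hm, Function.iterate_succ_apply, hx']
        exact Function.iterate_fixed (map_zero gl) m
      have h3 : x ∈ LinearMap.ker (gl ^ max N 1) := h2
      rw [hker] at h3
      exact h3
    · have hrange : LinearMap.range (gl ^ max N 1) = ⊤ := by
        have h4 := (hN _ (le_max_left N 1)).sup_eq_top
        rwa [hker, bot_sup_eq] at h4
      intro y
      have hy : y ∈ LinearMap.range (gl ^ max N 1) := by rw [hrange]; trivial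
      obtain ⟨z, hz⟩ := hy
      refine ⟨(gl ^ m) z, ?_⟩
      rw [← hz, Module.End.pow_apply, Module.End.pow_apply, hm,
        Function.iterate_succ_apply']

/-- Finitely generated projective modules belong to any `d`-cluster tilting subcategory. -/
lemma aux_proj_mem {d : ℕ} {𝒳 : Set (ModuleCat Γ)} (h𝒳 : IsdClusterTilting Γ d 𝒳)
    (K : ModuleCat Γ) (hfin : Module.Finite Γ K) (hproj : Projective K) : K ∈ 𝒳 := by
  refine (h𝒳.mem_iff_ext_out K hfin).mpr ?_
  intro Y hY i h1 h2
  obtain ⟨m, rfl⟩ : ∃ m, i = m + 1 := Nat.exists_eq_succ_of_ne_zero (by omega)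
  haveI := hproj
  exact aux_subsingleton_of_isZero (isZero_Ext_succ_of_projective K Y m)

end Aux2

/-- The differentials `f_j` (for `2 ≤ j ≤ d`) of a minimal projective resolution of `X ∈ 𝒳`
are left minimal; and if `X` has no non-zero projective summand then `f₁` is left minimal.
Here `f_j = R.δ (j-1) : P j ⟶ P (j-1)`. -/
theorem min_proj_res_differentials_left_minimal
    (k Γ : Type) [Field k] [Ring Γ] [Algebra k Γ] [FiniteDimensional k Γ]
    (d : ℕ) (hd : 1 ≤ d)
    (𝒳 : Set (ModuleCat Γ)) (h𝒳 : IsdClusterTilting Γ d 𝒳)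
    (X : ModuleCat Γ) (hX : X ∈ 𝒳) (R : MinProjRes Γ X) :
    (∀ j, 2 ≤ j → j ≤ d →
      ∀ g : R.P (j - 1) ⟶ R.P (j - 1), R.δ (j - 1) ≫ g = R.δ (j - 1) → IsIso g) ∧
    (NoNonzeroProjSummand Γ X →
      ∀ g : R.P 0 ⟶ R.P 0, R.δ 0 ≫ g = R.δ 0 → IsIso g) := by
  haveI : IsNoetherianRing Γ := isNoetherian_of_tower k inferInstance
  haveI : IsArtinianRing Γ := isArtinian_of_tower k inferInstance
  have hXfin : Module.Finite Γ X := h𝒳.finite X hX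
  have hPfin := R.P_finite hXfin
  constructor
  · -- part 1 : 2 ≤ j ≤ d
    intro j hj2 hjd g₀ hg₀
    obtain ⟨m, rfl⟩ : ∃ m, j = m + 2 := ⟨j - 2, by omega⟩
    show IsIso (g₀ : R.P (m+1) ⟶ R.P (m+1))
    set g : R.P (m+1) ⟶ R.P (m+1) := g₀ with hgdef
    have hg : R.δ (m+1) ≫ g = R.δ (m+1) := hg₀
    have hfix : ∀ x ∈ LinearMap.range ((R.δ (m+1)).hom : R.P (m+2) →ₗ[Γ] R.P (m+1)), g x = x := by
      rintro x ⟨y, rfl⟩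
      exact ConcreteCategory.congr_hom hg y
    let gl : R.P (m+1) →ₗ[Γ] R.P (m+1) := g.hom
    obtain ⟨n, hn1, hcompl, hle, hbij⟩ := aux_fitting (hPfin (m+1)) gl _ hfix
    set K := LinearMap.ker (gl ^ n) with hKdef
    set I := LinearMap.range (gl ^ n) with hIdef
    have hMker : LinearMap.range ((R.δ (m+1)).hom : R.P (m+2) →ₗ[Γ] R.P (m+1))
        = LinearMap.ker ((R.δ m).hom : R.P (m+1) →ₗ[Γ] R.P m) :=
      (LinearMap.exact_iff.mp (R.exact m)).symm
    let u : ModuleCat.of Γ K ⟶ R.P m :=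
      ModuleCat.ofHom (((R.δ m).hom : R.P (m+1) →ₗ[Γ] R.P m) ∘ₗ K.subtype)
    have huinj : Function.Injective u := by
      intro x y hxy
      have h1 : R.δ m (x.1 - y.1) = 0 := by
        rw [map_sub, sub_eq_zero]
        exact hxy
      have h2 : x.1 - y.1 ∈ I := by
        apply hle
        rw [hMker]
        exact h1
      have h3 : x.1 - y.1 ∈ K := sub_mem x.2 y.2
      have h4 : x.1 - y.1 = 0 := Submodule.disjoint_def.mp hcompl.disjoint _ h3 h2
      exact Subtype.ext (sub_eq_zero.mp h4)
    let q : R.P (m+1) →ₗ[Γ] K := K.linearProjOfIsCompl I hcompl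
    let ψ : R.P (m+1) ⟶ ModuleCat.of Γ K := ModuleCat.ofHom q
    have hψ : R.δ (m+1) ≫ ψ = 0 := by
      ext y : 2
      show q (R.δ (m+1) y) = 0
      have h5 : R.δ (m+1) y ∈ I := hle ⟨y, rfl⟩
      exact Submodule.linearProjOfIsCompl_apply_right hcompl ⟨_, h5⟩
    have hKproj : Projective (ModuleCat.of Γ K) :=
      aux_projective_of_retract (R.proj (m+1)) (ModuleCat.ofHom K.subtype) (ModuleCat.ofHom q)
        (by ext x : 2; exact Submodule.linearProjOfIsCompl_apply_left hcompl x)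
    have hKfin : Module.Finite Γ (ModuleCat.of Γ K) := by
      haveI := hPfin (m+1)
      exact Module.Finite.iff_fg.mpr (IsNoetherian.noetherian _)
    have hKmem : ModuleCat.of Γ K ∈ 𝒳 := aux_proj_mem h𝒳 _ hKfin hKproj
    have hsub : Subsingleton
        (((Ext ℤ (ModuleCat Γ) (m+1)).obj (Opposite.op X)).obj (ModuleCat.of Γ K)) :=
      (h𝒳.mem_iff_ext_out X hXfin).mp hX _ hKmem (m+1) (by omega) (by omega)
    obtain ⟨χ, hχ⟩ := R.lift_of_extVanish m hsub ψ hψ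
    have hχu : u ≫ χ = 𝟙 (ModuleCat.of Γ K) := by
      ext x : 2
      show χ (R.δ m x.1) = x
      have h6 : χ (R.δ m x.1) = q x.1 := ConcreteCategory.congr_hom hχ x.1
      rw [h6]
      exact Submodule.linearProjOfIsCompl_apply_left hcompl x
    let w : R.P m ⟶ R.P m := 𝟙 _ - χ ≫ u
    have hwmin : IsIso w := by
      cases m with
      | zero =>
        refine R.min0 w ?_
        have hupr : u ≫ R.pr = 0 := by
          ext z
          exact R.exact0.apply_apply_eq_zero z.1
        show (𝟙 _ - χ ≫ u) ≫ R.pr = R.pr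
        rw [Preadditive.sub_comp, Category.id_comp, Category.assoc, hupr,
          Limits.comp_zero, sub_zero]
      | succ m' =>
        refine R.min m' w ?_
        have hupr : u ≫ R.δ m' = 0 := by
          ext z
          exact (R.exact m').apply_apply_eq_zero z.1
        show (𝟙 _ - χ ≫ u) ≫ R.δ m' = R.δ m'
        rw [Preadditive.sub_comp, Category.id_comp, Category.assoc, hupr,
          Limits.comp_zero, sub_zero]
    have hu0 : u ≫ w = 0 := by
      show u ≫ (𝟙 _ - χ ≫ u) = 0
      rw [Preadditive.comp_sub, Category.comp_id, ← Category.assoc, hχu,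
        Category.id_comp, sub_self]
    have hKbot : K = ⊥ := by
      rw [Submodule.eq_bot_iff]
      intro x hx
      have h8 : u ⟨x, hx⟩ = 0 := by
        haveI := hwmin
        have h9 : w (u ⟨x, hx⟩) = 0 := ConcreteCategory.congr_hom hu0 ⟨x, hx⟩
        exact aux_injective_of_isIso w (by rw [h9, map_zero])
      have h10 : (⟨x, hx⟩ : K) = 0 := huinj (by rw [h8, map_zero])
      exact congrArg Subtype.val h10
    exact aux_isIso_of_bijective g (hbij hKbot)
  · -- part 2 : j = 1
    intro hnp g hg
    have hfix : ∀ x ∈ LinearMap.range ((R.δ 0).hom : R.P 1 →ₗ[Γ] R.P 0), g x = x := by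
      rintro x ⟨y, rfl⟩
      exact ConcreteCategory.congr_hom hg y
    let gl : R.P 0 →ₗ[Γ] R.P 0 := g.hom
    obtain ⟨n, hn1, hcompl, hle, hbij⟩ := aux_fitting (hPfin 0) gl _ hfix
    set K := LinearMap.ker (gl ^ n) with hKdef
    set I := LinearMap.range (gl ^ n) with hIdef
    have hkerpr : LinearMap.ker (R.pr.hom : R.P 0 →ₗ[Γ] X)
        = LinearMap.range ((R.δ 0).hom : R.P 1 →ₗ[Γ] R.P 0) :=
      LinearMap.exact_iff.mp R.exact0
    let s : ModuleCat.of Γ K ⟶ X := ModuleCat.ofHom ((R.pr.hom : R.P 0 →ₗ[Γ] X) ∘ₗ K.subtype)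
    let q : R.P 0 →ₗ[Γ] K := K.linearProjOfIsCompl I hcompl
    have hq : LinearMap.ker (R.pr.hom : R.P 0 →ₗ[Γ] X) ≤ LinearMap.ker q := by
      intro x hx
      have hxI : x ∈ I := by
        apply hle
        rw [← hkerpr]
        exact hx
      exact Submodule.linearProjOfIsCompl_apply_right hcompl ⟨x, hxI⟩
    let eq0 : (R.P 0 ⧸ LinearMap.ker (R.pr.hom : R.P 0 →ₗ[Γ] X)) ≃ₗ[Γ] X :=
      LinearMap.quotKerEquivOfSurjective _ R.epi
    let r : X ⟶ ModuleCat.of Γ K :=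
      ModuleCat.ofHom
        (((LinearMap.ker (R.pr.hom : R.P 0 →ₗ[Γ] X)).liftQ q hq) ∘ₗ eq0.symm.toLinearMap)
    have hsr : s ≫ r = 𝟙 (ModuleCat.of Γ K) := by
      ext x : 2
      have h1 : eq0.symm (R.pr x.1) = Submodule.Quotient.mk x.1 := by
        apply eq0.injective
        rw [LinearEquiv.apply_symm_apply]
        rfl
      show ((LinearMap.ker (R.pr.hom : R.P 0 →ₗ[Γ] X)).liftQ q hq) (eq0.symm (R.pr x.1)) = x
      rw [h1, Submodule.liftQ_apply]
      exact Submodule.linearProjOfIsCompl_apply_left hcompl x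
    have hKproj : Projective (ModuleCat.of Γ K) :=
      aux_projective_of_retract (R.proj 0) (ModuleCat.ofHom K.subtype) (ModuleCat.ofHom q)
        (by ext x : 2; exact Submodule.linearProjOfIsCompl_apply_left hcompl x)
    have hz := hnp (ModuleCat.of Γ K) hKproj ⟨s, r, hsr⟩
    have hss := aux_subsingleton_of_isZero hz
    have hKbot : K = ⊥ := by
      rw [Submodule.eq_bot_iff]
      intro x hx
      have h10 : (⟨x, hx⟩ : K) = 0 := @Subsingleton.elim _ hss _ _
      exact congrArg Subtype.val h10
    exact aux_isIso_of_bijective g (hbij hKbot)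
end
end

section
/- Let 𝒳 ⊆ mod Γ be a d-cluster tilting subcategory and X ∈ 𝒳 with augmented projective resolution ⋯ →^{f₂} P₁ →^{f₁} P₀ →^{f₀} X → 0. Then for each 1 ≤ r ≤ d, the complex P_{r−1} →^{f_{r−1}} ⋯ →^{f₁} P₀ →^{f₀} X → 0 → ⋯ → 0 (padded with zeros to length d+1) is a d-cokernel of f_r in 𝒳, i.e. the complex P_r → P_{r−1} → ⋯ → P₀ → X → 0 → ⋯ → 0 becomes exact upon applying Hom_Γ(−, Y) for every Y ∈ 𝒳. -/
/-!
`Hom(-, Y)` is left exact, which gives exactness at `Hom(X, Y)` and `Hom(P₀, Y)`. Further along,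
the cohomology of `Hom(P_•, Y)` at `P_{i+1}` is `Ext^{i+1}(X, Y)`, which vanishes for
`1 ≤ i + 1 ≤ d - 1` because `X` and `Y` lie in the `d`-cluster tilting subcategory `𝒳`.
-/

noncomputable section
open CategoryTheory CategoryTheory.Limits

/-- An augmented projective resolution `⋯ → P₁ → P₀ → X → 0` (not necessarily minimal). -/
structure ProjRes (Γ : Type) [Ring Γ] (X : ModuleCat Γ) where
  P : ℕ → ModuleCat Γ
  proj : ∀ n, Projective (P n)
  pr : P 0 ⟶ X
  δ : ∀ n, P (n + 1) ⟶ P n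
  epi : Function.Surjective pr
  exact0 : Function.Exact (δ 0) pr
  exact : ∀ n, Function.Exact (δ (n + 1)) (δ n)

namespace CategoryTheory

lemma ShortComplex.Exact.exact_precomp {C : Type*} [Category* C] [Preadditive C] [Balanced C]
    {S : ShortComplex C} (hS : S.Exact) [Epi S.g] (Y : C) :
    Function.Exact (fun u : S.X₃ ⟶ Y => S.g ≫ u) (fun v : S.X₂ ⟶ Y => S.f ≫ v) := by
  intro v
  constructor
  · exact fun hv => hS.desc' v hv
  · rintro ⟨u, rfl⟩
    exact S.zero_assoc u |>.trans zero_comp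

lemma ProjectiveResolution.exact_precomp_of_isZero_ext {R C : Type*} [Ring R] [Category* C]
    [Abelian C] [Linear R C] [EnoughProjectives C] {X : C} (P : ProjectiveResolution X) {Y : C}
    (n : ℕ) (hExt : IsZero (((Ext R C (n + 1)).obj (Opposite.op X)).obj Y)) :
    Function.Exact (fun u : P.complex.X n ⟶ Y => P.complex.d (n + 1) n ≫ u)
      (fun v : P.complex.X (n + 1) ⟶ Y => P.complex.d (n + 2) (n + 1) ≫ v) := by
  have h : (P.complex.linearYonedaObj R Y).ExactAt (n + 1) :=
    (HomologicalComplex.exactAt_iff_isZero_homology _ _).2 (hExt.of_iso (P.isoExt (n + 1) Y).symm)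
  rw [HomologicalComplex.exactAt_iff' _ n (n + 1) (n + 2) (by simp) (by simp),
    ShortComplex.ShortExact.moduleCat_exact_iff_function_exact] at h
  exact h

end CategoryTheory

namespace ProjRes

variable {Γ : Type} [Ring Γ] {X : ModuleCat Γ} (R : ProjRes Γ X)

lemma δ_comp_pr : R.δ 0 ≫ R.pr = 0 := by
  ext x
  exact R.exact0.apply_apply_eq_zero x

lemma δ_comp_δ (n : ℕ) : R.δ (n + 1) ≫ R.δ n = 0 := by
  ext x
  exact (R.exact n).apply_apply_eq_zero x

instance epi_pr : Epi R.pr := (ModuleCat.epi_iff_surjective _).2 R.epi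

lemma shortComplex_exact0 : (ShortComplex.mk (R.δ 0) R.pr R.δ_comp_pr).Exact :=
  (ShortComplex.ShortExact.moduleCat_exact_iff_function_exact _).2 R.exact0

def complex : ChainComplex (ModuleCat Γ) ℕ := ChainComplex.of R.P R.δ R.δ_comp_δ

@[simp]
lemma complex_d (n : ℕ) : R.complex.d (n + 1) n = R.δ n := ChainComplex.of_d _ _ n

lemma complex_exactAt_succ (n : ℕ) : R.complex.ExactAt (n + 1) := by
  rw [HomologicalComplex.exactAt_iff' _ (n + 2) (n + 1) n (by simp) (by simp),
    ShortComplex.ShortExact.moduleCat_exact_iff_function_exact]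
  simp only [HomologicalComplex.sc', HomologicalComplex.shortComplexFunctor', complex_d]
  exact R.exact n

def toProjectiveResolution : ProjectiveResolution X where
  complex := R.complex
  projective := R.proj
  π := (ChainComplex.toSingle₀Equiv _ _).symm ⟨R.pr, by rw [complex_d]; exact R.δ_comp_pr⟩
  quasiIso := ⟨fun n => by
    cases n with
    | zero =>
      rw [ChainComplex.quasiIsoAt₀_iff, ShortComplex.quasiIso_iff_of_zeros' _ rfl rfl rfl]
      exact ⟨R.shortComplex_exact0, R.epi_pr⟩
    | succ n =>
      exact (quasiIsoAt_iff_exactAt' _ _ (ChainComplex.exactAt_succ_single_obj _ _)).2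
        (R.complex_exactAt_succ n)⟩

end ProjRes

theorem proj_res_is_d_cokernel_general
    (Γ : Type) [Ring Γ]
    (d : ℕ)
    (𝒳 : Set (ModuleCat Γ)) (h𝒳 : IsdClusterTilting Γ d 𝒳)
    (X : ModuleCat Γ) (hX : X ∈ 𝒳) (R : ProjRes Γ X)
    (r : ℕ) (hr2 : r ≤ d) (Y : ModuleCat Γ) (hY : Y ∈ 𝒳) :
    Function.Injective (fun u : X ⟶ Y => R.pr ≫ u) ∧
    Function.Exact (fun u : X ⟶ Y => R.pr ≫ u) (fun v : R.P 0 ⟶ Y => R.δ 0 ≫ v) ∧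
    ∀ i, i + 2 ≤ r → Function.Exact (fun u : R.P i ⟶ Y => R.δ i ≫ u)
      (fun v : R.P (i + 1) ⟶ Y => R.δ (i + 1) ≫ v) := by
  refine ⟨fun u u' h => (cancel_epi R.pr).1 h, R.shortComplex_exact0.exact_precomp Y,
    fun i hi => ?_⟩
  have hExt : ExtVanish Γ X Y (i + 1) :=
    (h𝒳.mem_iff_ext_out X (h𝒳.finite X hX)).1 hX Y hY (i + 1) (by omega) (by omega)
  have h := R.toProjectiveResolution.exact_precomp_of_isZero_ext i
    (@ModuleCat.isZero_of_subsingleton _ _ _ hExt)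
  simp only [ProjRes.toProjectiveResolution, ProjRes.complex_d] at h
  exact h

/-- For `X ∈ 𝒳` with projective resolution as above and `1 ≤ r ≤ d`, the truncation
`P_{r-1} → ⋯ → P₀ → X → 0 → ⋯ → 0` is a `d`-cokernel of `f_r` in `𝒳`: applying
`Hom_Γ(-, Y)` for `Y ∈ 𝒳` gives an exact sequence. -/
theorem proj_res_is_d_cokernel
    (k Γ : Type) [Field k] [Ring Γ] [Algebra k Γ] [FiniteDimensional k Γ]
    (d : ℕ) (hd : 1 ≤ d)
    (𝒳 : Set (ModuleCat Γ)) (h𝒳 : IsdClusterTilting Γ d 𝒳)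
    (X : ModuleCat Γ) (hX : X ∈ 𝒳) (R : ProjRes Γ X)
    (r : ℕ) (hr1 : 1 ≤ r) (hr2 : r ≤ d) (Y : ModuleCat Γ) (hY : Y ∈ 𝒳) :
    Function.Injective (fun u : X ⟶ Y => R.pr ≫ u) ∧
    Function.Exact (fun u : X ⟶ Y => R.pr ≫ u) (fun v : R.P 0 ⟶ Y => R.δ 0 ≫ v) ∧
    ∀ i, i + 2 ≤ r → Function.Exact (fun u : R.P i ⟶ Y => R.δ i ≫ u)
      (fun v : R.P (i + 1) ⟶ Y => R.δ (i + 1) ≫ v) :=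
  proj_res_is_d_cokernel_general Γ d 𝒳 h𝒳 X hX R r hr2 Y hY
end
end

section
/- Let 𝒯 be a k-linear Hom-finite category with Serre functor S, let T ∈ 𝒯 with Γ = End_𝒯(T). Then the functor 𝒯(T,−) restricts to an equivalence from add(ST) to the category of injective finite dimensional right Γ-modules. -/
noncomputable section
open CategoryTheory CategoryTheory.Limits

variable (k : Type) [Field k]
variable (𝒯 : Type) [Category.{0} 𝒯] [Preadditive 𝒯]

/-- The category is Hom-finite over `k`. -/
def HomFinite [CategoryTheory.Linear k 𝒯] : Prop :=
  ∀ X Y : 𝒯, FiniteDimensional k (X ⟶ Y)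

/-- The right `End T`-module structure (by precomposition) on `T ⟶ X`. -/
instance endOppositeModule (T X : 𝒯) : Module (End T)ᵐᵒᵖ (T ⟶ X) where
  smul m a := m.unop ≫ a
  one_smul a := Category.id_comp a
  mul_smul m n a := by
    show (n.unop * m.unop) ≫ a = m.unop ≫ n.unop ≫ a
    show (m.unop ≫ n.unop) ≫ a = _
    simp
  smul_zero m := Limits.comp_zero
  smul_add m a b := Preadditive.comp_add _ _ _ _ _ _
  add_smul m n a := Preadditive.add_comp _ _ _ _ _ _
  zero_smul a := Limits.zero_comp

/-- The `Γ`-linear map `𝒯(T,X) → 𝒯(T,Y)` induced by postcomposition with `f : X ⟶ Y`. -/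
def postcompHom (T : 𝒯) {X Y : 𝒯} (f : X ⟶ Y) :
    (T ⟶ X) →ₗ[(End T)ᵐᵒᵖ] (T ⟶ Y) where
  toFun a := a ≫ f
  map_add' a b := Preadditive.add_comp _ _ _ _ _ _
  map_smul' m a := by
    show (m.unop ≫ a) ≫ f = m.unop ≫ (a ≫ f)
    simp

/-- The image of `X` under the functor `𝒯(T,-) : 𝒯 → Mod (End T)ᵐᵒᵖ`. -/
def homMod (T X : 𝒯) : ModuleCat (End T)ᵐᵒᵖ := ModuleCat.of _ (T ⟶ X)

/-- Membership in `add T`: direct summand of a finite direct sum of copies of `T`. -/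
def InAdd [HasFiniteBiproducts 𝒯] (T X : 𝒯) : Prop :=
  ∃ (n : ℕ) (s : X ⟶ biproduct (fun _ : Fin n => T))
    (r : biproduct (fun _ : Fin n => T) ⟶ X), s ≫ r = 𝟙 X

/-- `X` is indecomposable. -/
def Indecomposable' (X : 𝒯) : Prop :=
  ¬ Limits.IsZero X ∧ ∀ e : X ⟶ X, e ≫ e = e → e = 0 ∨ e = 𝟙 X

/-- The functor `𝒯(T,-)` is full onto `Γ`-linear maps. -/
def HomFunctorFull (T : 𝒯) : Prop :=
  ∀ (X Y : 𝒯) (φ : (T ⟶ X) →ₗ[(End T)ᵐᵒᵖ] (T ⟶ Y)), ∃ g : X ⟶ Y, ∀ a, φ a = a ≫ g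

/-- The essential image of `𝒯(T,-)` in `mod (End T)ᵐᵒᵖ`. -/
def EssIm (T : 𝒯) : Set (ModuleCat (End T)ᵐᵒᵖ) :=
  {M | ∃ X : 𝒯, Nonempty (M ≅ homMod 𝒯 T X)}

/-- A Serre functor: an autoequivalence `S` with binatural isomorphisms
`𝒯(Y, SX) ≅ D 𝒯(X,Y)`. -/
structure SerreData [CategoryTheory.Linear k 𝒯] where
  S : 𝒯 ⥤ 𝒯
  equiv : S.IsEquivalence
  ε : ∀ X Y : 𝒯, (Y ⟶ S.obj X) ≃ₗ[k] Module.Dual k (X ⟶ Y)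
  nat_left : ∀ {X Y Y' : 𝒯} (g : Y ⟶ Y') (h : Y' ⟶ S.obj X) (f : X ⟶ Y),
    ε X Y (g ≫ h) f = ε X Y' h (f ≫ g)
  nat_right : ∀ {X X' Y : 𝒯} (u : X ⟶ X') (h : Y ⟶ S.obj X) (f : X' ⟶ Y),
    ε X' Y (h ≫ S.map u) f = ε X Y h (u ≫ f)

/-- A candidate `(d+2)`-angle `X₀ → X₁ → ⋯ → X_{d+1} → Σᵈ X₀`. -/
structure Candidate (Sd : 𝒯 ⥤ 𝒯) (d : ℕ) where
  obj : ℕ → 𝒯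
  hom : ∀ n, obj n ⟶ obj (n + 1)
  conn : obj (d + 1) ⟶ Sd.obj (obj 0)

/-- A `(d+2)`-angulated structure on `𝒯`: an auto-equivalence `Σᵈ` together with a
class of `(d+2)`-angles satisfying (part of) the Geiss–Keller–Oppermann axioms. -/
structure Angulation (d : ℕ) where
  shift : 𝒯 ⥤ 𝒯
  equiv : shift.IsEquivalence
  IsAngle : Candidate 𝒯 shift d → Prop
  comp_zero : ∀ C, IsAngle C → ∀ n, n + 1 ≤ d → C.hom n ≫ C.hom (n + 1) = 0
  conn_zero : ∀ C, IsAngle C → C.hom d ≫ C.conn = 0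
  exists_angle : ∀ {A B : 𝒯} (f : A ⟶ B), ∃ C, IsAngle C ∧
    ∃ (eA : C.obj 0 ≅ A) (eB : C.obj 1 ≅ B), C.hom 0 = eA.hom ≫ f ≫ eB.inv
  hom_exact : ∀ C, IsAngle C → ∀ (W : 𝒯) (n : ℕ), n + 1 ≤ d →
    Function.Exact (fun a : W ⟶ C.obj n => a ≫ C.hom n)
      (fun a : W ⟶ C.obj (n + 1) => a ≫ C.hom (n + 1))
  hom_exact_last : ∀ C, IsAngle C → ∀ W : 𝒯,
    Function.Exact (fun a : W ⟶ C.obj d => a ≫ C.hom d)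
      (fun a : W ⟶ C.obj (d + 1) => a ≫ C.conn)

/-- Condition (b) of the paper. -/
def CondB [HasFiniteBiproducts 𝒯] {d : ℕ} (A : Angulation 𝒯 d) (T : 𝒯) : Prop :=
  ∀ X : 𝒯, Indecomposable' 𝒯 X → (∃ a : T ⟶ X, a ≠ 0) →
    ∃ C, A.IsAngle C ∧ (∀ i, i ≤ d → InAdd 𝒯 T (C.obj i)) ∧
      Nonempty (C.obj (d + 1) ≅ X) ∧ ∀ a : T ⟶ C.obj (d + 1), a ≫ C.conn = 0

/-! Serre duality `𝒯(T, ST) ≅ D𝒯(T, T) = DΓ` identifies `Hom_Γ(M, 𝒯(T, ST))` with `D M`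
(evaluate at `𝟙 T`). Hence `𝒯(T, ST)` is injective, since `k` is, and
`End_Γ 𝒯(T, ST) ≅ DDΓ ≅ Γ ≅ End(ST)`, so `𝒯(T, -)` is fully faithful on `ST`, and therefore on
`add (ST)`, whose objects are retracts of finite biproducts of `ST`. Conversely a finite
injective `M` embeds into `(DΓ)ⁿ = 𝒯(T, (ST)ⁿ)` through a `k`-basis of `D M`; the embedding
splits, and the resulting idempotent of `(ST)ⁿ` lifts to `𝒯`, where it splits. -/

universe u v

lemma Module.Injective.of_retract {R : Type u} [Ring R] {M N : Type v} [AddCommGroup M]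
    [Module R M] [AddCommGroup N] [Module R N] [Module.Injective R N] (s : M →ₗ[R] N)
    (r : N →ₗ[R] M) (hrs : r ∘ₗ s = LinearMap.id) : Module.Injective R M where
  out _ _ _ _ _ _ i hi g :=
    have ⟨h, hh⟩ := Module.Injective.out i hi (s ∘ₗ g)
    ⟨r ∘ₗ h, fun x => by
      rw [LinearMap.comp_apply, hh, ← LinearMap.comp_apply r, ← LinearMap.comp_assoc, hrs,
        LinearMap.id_comp]⟩

namespace SerreDuality

variable {k 𝒯}

@[simp]
lemma smul_hom_eq_comp {T X : 𝒯} (m : (End T)ᵐᵒᵖ) (a : T ⟶ X) : m • a = m.unop ≫ a := rfl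

@[simp]
lemma postcompHom_apply (T : 𝒯) {X Y : 𝒯} (f : X ⟶ Y) (a : T ⟶ X) :
    postcompHom 𝒯 T f a = a ≫ f := rfl

section Postcomp

variable (T : 𝒯)

lemma postcompHom_bijective_of_retract {X X' Y Y' : 𝒯} (hX : Retract X X')
    (hY : Retract Y Y') (h : Function.Bijective (postcompHom 𝒯 T : (X' ⟶ Y') → _)) :
    Function.Bijective (postcompHom 𝒯 T : (X ⟶ Y) → _) := by
  refine ⟨fun f g hfg => ?_, fun φ => ?_⟩
  · have : hX.r ≫ f ≫ hY.i = hX.r ≫ g ≫ hY.i := h.1 <| by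
      ext a
      simpa using congr($hfg (a ≫ hX.r) ≫ hY.i)
    simpa using congr(hX.i ≫ $this ≫ hY.r)
  · obtain ⟨g, hg⟩ := h.2 (postcompHom 𝒯 T hY.i ∘ₗ φ ∘ₗ postcompHom 𝒯 T hX.r)
    refine ⟨hX.i ≫ g ≫ hY.r, LinearMap.ext fun a => ?_⟩
    simpa using congr($(LinearMap.congr_fun hg (a ≫ hX.i)) ≫ hY.r)

lemma exists_retract_linearEquiv_of_leftInverse [IsIdempotentComplete 𝒯] {W : 𝒯}
    (hW : Function.Bijective (postcompHom 𝒯 T : (W ⟶ W) → _)) {M : Type} [AddCommGroup M]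
    [Module (End T)ᵐᵒᵖ M] (F : M →ₗ[(End T)ᵐᵒᵖ] (T ⟶ W)) (G : (T ⟶ W) →ₗ[(End T)ᵐᵒᵖ] M)
    (hGF : G ∘ₗ F = LinearMap.id) :
    ∃ X : 𝒯, Nonempty (Retract X W) ∧ Nonempty (M ≃ₗ[(End T)ᵐᵒᵖ] (T ⟶ X)) := by
  have hGF' (x : M) : G (F x) = x := LinearMap.congr_fun hGF x
  obtain ⟨e, he⟩ := hW.2 (F ∘ₗ G)
  have he' (a : T ⟶ W) : a ≫ e = F (G a) := LinearMap.congr_fun he a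
  have idem : e ≫ e = e := hW.1 <| by
    ext a
    simp [← Category.assoc, he', hGF']
  obtain ⟨X, i, r, hir, hri⟩ := IsIdempotentComplete.idempotents_split W e idem
  refine ⟨X, ⟨⟨i, r, hir⟩⟩, ⟨LinearEquiv.ofLinearMap (f := postcompHom 𝒯 T r ∘ₗ F)
    (g := G ∘ₗ postcompHom 𝒯 T i) ?_ ?_⟩⟩
  · ext y
    simp [← he', ← hri, hir, reassoc_of% hir]
  · ext x
    simp [hri, he', hGF']

variable [HasFiniteBiproducts 𝒯]

def homBiproductLinearEquiv {ι : Type} [Finite ι] (Y : ι → 𝒯) :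
    (T ⟶ ⨁ Y) ≃ₗ[(End T)ᵐᵒᵖ] ∀ j, T ⟶ Y j where
  toFun a j := a ≫ biproduct.π Y j
  invFun := biproduct.lift
  map_add' a b := by ext; simp
  map_smul' m a := by ext; simp
  left_inv a := by ext; simp
  right_inv b := by ext; simp

lemma postcompHom_bijective_biproduct_right {X : 𝒯} {ι : Type} [Finite ι] {Y : ι → 𝒯}
    (h : ∀ j, Function.Bijective (postcompHom 𝒯 T : (X ⟶ Y j) → _)) :
    Function.Bijective (postcompHom 𝒯 T : (X ⟶ ⨁ Y) → _) := by
  refine ⟨fun f g hfg => biproduct.hom_ext _ _ fun j => (h j).1 ?_, fun φ => ?_⟩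
  · ext a
    simpa using congr($hfg a ≫ biproduct.π Y j)
  · choose g hg using fun j => (h j).2 (postcompHom 𝒯 T (biproduct.π Y j) ∘ₗ φ)
    refine ⟨biproduct.lift g, LinearMap.ext fun a => biproduct.hom_ext _ _ fun j => ?_⟩
    simpa using LinearMap.congr_fun (hg j) a

lemma postcompHom_bijective_biproduct_left {ι : Type} [Finite ι] {X : ι → 𝒯} {Y : 𝒯}
    (h : ∀ i, Function.Bijective (postcompHom 𝒯 T : (X i ⟶ Y) → _)) :
    Function.Bijective (postcompHom 𝒯 T : (⨁ X ⟶ Y) → _) := by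
  have := Fintype.ofFinite ι
  refine ⟨fun f g hfg => biproduct.hom_ext' _ _ fun i => (h i).1 ?_, fun φ => ?_⟩
  · ext a
    simpa using congr($hfg (a ≫ biproduct.ι X i))
  · choose g hg using fun i => (h i).2 (φ ∘ₗ postcompHom 𝒯 T (biproduct.ι X i))
    refine ⟨biproduct.desc g, LinearMap.ext fun a => ?_⟩
    calc a ≫ biproduct.desc g = ∑ i, φ (a ≫ biproduct.π X i ≫ biproduct.ι X i) := by
          simp only [biproduct.desc_eq, Preadditive.comp_sum]
          refine Finset.sum_congr rfl fun i _ => ?_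
          simpa using LinearMap.congr_fun (hg i) (a ≫ biproduct.π X i)
      _ = φ a := by
          rw [← map_sum, ← Preadditive.comp_sum, biproduct.total, Category.comp_id]

end Postcomp

section Serre

variable [Linear k 𝒯]

instance isScalarTower_hom (T X : 𝒯) : IsScalarTower k (End T)ᵐᵒᵖ (T ⟶ X) where
  smul_assoc c m a := Linear.smul_comp _ _ _ c m.unop a

lemma moduleFinite_endOp (T : 𝒯) [FiniteDimensional k (T ⟶ T)] :
    Module.Finite k (End T)ᵐᵒᵖ :=
  have : Module.Finite k (End T) := ‹FiniteDimensional k (T ⟶ T)›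
  inferInstance

variable (SD : SerreData k 𝒯) (T : 𝒯)

lemma ε_apply_eq_ε_comp_id (a : T ⟶ SD.S.obj T) (f : T ⟶ T) :
    SD.ε T T a f = SD.ε T T (f ≫ a) (𝟙 T) := by
  rw [SD.nat_left, Category.id_comp]

variable {M : Type} [AddCommGroup M] [Module k M] [Module (End T)ᵐᵒᵖ M]
  [IsScalarTower k (End T)ᵐᵒᵖ M]

variable (k) in
def orbitMap (x : M) : (T ⟶ T) →ₗ[k] M where
  toFun f := MulOpposite.op (α := End T) f • x
  map_add' f g := add_smul (MulOpposite.op (α := End T) f) (MulOpposite.op g) x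
  map_smul' c f := smul_assoc c (MulOpposite.op (α := End T) f) x

def serreLift (ξ : Module.Dual k M) : M →ₗ[(End T)ᵐᵒᵖ] (T ⟶ SD.S.obj T) where
  toFun x := (SD.ε T T).symm (ξ ∘ₗ orbitMap k T x)
  map_add' x y := by
    rw [← map_add]
    congr 1
    ext f
    simp [orbitMap]
  map_smul' m x := by
    apply (SD.ε T T).injective
    ext f
    simp only [smul_hom_eq_comp, RingHom.id_apply, SD.nat_left, LinearEquiv.apply_symm_apply]
    simp only [LinearMap.comp_apply, orbitMap, LinearMap.coe_mk, AddHom.coe_mk, ← mul_smul]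
    rfl

lemma serreLift_apply (ξ : Module.Dual k M) (x : M) (f : T ⟶ T) :
    SD.ε T T (serreLift SD T ξ x) f = ξ (MulOpposite.op (α := End T) f • x) := by
  simp [serreLift, orbitMap]

def serreHomEquiv : (M →ₗ[(End T)ᵐᵒᵖ] (T ⟶ SD.S.obj T)) ≃ Module.Dual k M where
  toFun φ := Module.Dual.eval k (T ⟶ T) (𝟙 T) ∘ₗ (SD.ε T T).toLinearMap ∘ₗ φ.restrictScalars k
  invFun := serreLift SD T
  left_inv φ := by
    ext x
    apply (SD.ε T T).injective
    ext f
    rw [serreLift_apply, ε_apply_eq_ε_comp_id SD T (φ x) f]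
    exact congrArg (SD.ε T T · (𝟙 T)) (φ.map_smul _ x)
  right_inv ξ := by
    ext x
    exact (serreLift_apply SD T ξ x (𝟙 T)).trans (congrArg ξ (one_smul (End T)ᵐᵒᵖ x))

@[simp]
lemma serreHomEquiv_apply (φ : M →ₗ[(End T)ᵐᵒᵖ] (T ⟶ SD.S.obj T)) (x : M) :
    serreHomEquiv SD T φ x = SD.ε T T (φ x) (𝟙 T) := rfl

lemma serreHomEquiv_comp {N : Type} [AddCommGroup N] [Module k N] [Module (End T)ᵐᵒᵖ N]
    [IsScalarTower k (End T)ᵐᵒᵖ N] (φ : M →ₗ[(End T)ᵐᵒᵖ] (T ⟶ SD.S.obj T))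
    (i : N →ₗ[(End T)ᵐᵒᵖ] M) :
    serreHomEquiv SD T (φ ∘ₗ i) = serreHomEquiv SD T φ ∘ₗ i.restrictScalars k := rfl

lemma injective_hom_serre : Module.Injective (End T)ᵐᵒᵖ (T ⟶ SD.S.obj T) := by
  refine ⟨fun X Y _ _ _ _ i hi g => ?_⟩
  let : Module k X := Module.compHom X (algebraMap k (End T)ᵐᵒᵖ)
  let : Module k Y := Module.compHom Y (algebraMap k (End T)ᵐᵒᵖ)
  have : IsScalarTower k (End T)ᵐᵒᵖ X := IsScalarTower.of_algebraMap_smul fun _ _ => rfl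
  have : IsScalarTower k (End T)ᵐᵒᵖ Y := IsScalarTower.of_algebraMap_smul fun _ _ => rfl
  obtain ⟨l, hl⟩ := (i.restrictScalars k).exists_leftInverse_of_injective
    (LinearMap.ker_eq_bot.mpr hi)
  refine ⟨(serreHomEquiv SD T).symm (serreHomEquiv SD T g ∘ₗ l), fun x => ?_⟩
  have : (serreHomEquiv SD T).symm (serreHomEquiv SD T g ∘ₗ l) ∘ₗ i = g := by
    apply (serreHomEquiv SD T).injective
    rw [serreHomEquiv_comp, Equiv.apply_symm_apply, LinearMap.comp_assoc, hl,
      LinearMap.comp_id]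
  exact LinearMap.congr_fun this x

lemma serreHomEquiv_postcompHom_map (c : T ⟶ T) :
    serreHomEquiv SD T (postcompHom 𝒯 T (SD.S.map c)) =
      (SD.ε T T).dualMap (Module.Dual.eval k (T ⟶ T) c) := by
  ext a
  simp [SD.nat_right]

lemma postcompHom_bijective_serre [FiniteDimensional k (T ⟶ T)] :
    Function.Bijective (postcompHom 𝒯 T : (SD.S.obj T ⟶ SD.S.obj T) → _) := by
  have := SD.equiv
  rw [← Function.Bijective.of_comp_iff _ ⟨SD.S.map_injective, SD.S.map_surjective⟩]
  have : postcompHom 𝒯 T ∘ SD.S.map =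
      (serreHomEquiv SD T).symm ∘ (SD.ε T T).dualMap ∘ Module.evalEquiv k (T ⟶ T) := by
    funext c
    exact (serreHomEquiv SD T).eq_symm_apply.mpr (serreHomEquiv_postcompHom_map SD T c)
  rw [this]
  exact (serreHomEquiv SD T).symm.bijective.comp
    ((SD.ε T T).dualMap.bijective.comp (Module.evalEquiv k _).bijective)

end Serre

section AddSerre

variable [Linear k 𝒯] [HasFiniteBiproducts 𝒯] (SD : SerreData k 𝒯) (T : 𝒯)

lemma postcompHom_bijective_of_inAdd [FiniteDimensional k (T ⟶ T)] {X Y : 𝒯}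
    (hX : InAdd 𝒯 (SD.S.obj T) X) (hY : InAdd 𝒯 (SD.S.obj T) Y) :
    Function.Bijective (postcompHom 𝒯 T : (X ⟶ Y) → _) := by
  obtain ⟨m, sX, rX, hX⟩ := hX
  obtain ⟨n, sY, rY, hY⟩ := hY
  exact postcompHom_bijective_of_retract T ⟨sX, rX, hX⟩ ⟨sY, rY, hY⟩ <|
    postcompHom_bijective_biproduct_left T fun _ =>
      postcompHom_bijective_biproduct_right T fun _ => postcompHom_bijective_serre SD T

lemma injective_hom_of_inAdd {X : 𝒯} (hX : InAdd 𝒯 (SD.S.obj T) X) :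
    Module.Injective (End T)ᵐᵒᵖ (T ⟶ X) := by
  obtain ⟨n, s, r, hsr⟩ := hX
  have := injective_hom_serre SD T
  let e := homBiproductLinearEquiv T fun _ : Fin n => SD.S.obj T
  refine .of_retract (e.toLinearMap ∘ₗ postcompHom 𝒯 T s)
    (postcompHom 𝒯 T r ∘ₗ e.symm.toLinearMap) ?_
  ext a
  simp [hsr]

lemma exists_inAdd_linearEquiv_of_injective [IsIdempotentComplete 𝒯]
    [FiniteDimensional k (T ⟶ T)] (M : Type) [AddCommGroup M] [Module (End T)ᵐᵒᵖ M]
    [Module.Finite (End T)ᵐᵒᵖ M] [Module.Injective (End T)ᵐᵒᵖ M] :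
    ∃ X : 𝒯, InAdd 𝒯 (SD.S.obj T) X ∧ Nonempty (M ≃ₗ[(End T)ᵐᵒᵖ] (T ⟶ X)) := by
  let : Module k M := Module.compHom M (algebraMap k (End T)ᵐᵒᵖ)
  have : IsScalarTower k (End T)ᵐᵒᵖ M := IsScalarTower.of_algebraMap_smul fun _ _ => rfl
  have := moduleFinite_endOp (k := k) T
  have : Module.Finite k M := .trans (End T)ᵐᵒᵖ M
  let b := Module.finBasis k M
  let W := ⨁ fun _ : Fin (Module.finrank k M) => SD.S.obj T
  -- the coordinate functionals of `b`, transported by Serre duality, embed `M` into `𝒯(T, W)`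
  let F : M →ₗ[(End T)ᵐᵒᵖ] (T ⟶ W) := (homBiproductLinearEquiv T _).symm.toLinearMap ∘ₗ
    LinearMap.pi fun i => (serreHomEquiv SD T).symm (b.coord i)
  have hF : Function.Injective F := by
    refine (injective_iff_map_eq_zero F).mpr fun x hx =>
      b.forall_coord_eq_zero_iff.mp fun i => ?_
    have hi : (serreHomEquiv SD T).symm (b.coord i) x = 0 := by
      simpa [F] using congr_fun (congrArg (homBiproductLinearEquiv T _) hx) i
    rw [← (serreHomEquiv SD T).apply_symm_apply (b.coord i), serreHomEquiv_apply, hi, map_zero,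
      LinearMap.zero_apply]
  obtain ⟨G, hGF⟩ := Module.Injective.extension_property _ M _ _ F hF LinearMap.id
  have hW : InAdd 𝒯 (SD.S.obj T) W := ⟨_, 𝟙 W, 𝟙 W, Category.id_comp _⟩
  obtain ⟨X, ⟨h⟩, hM⟩ := exists_retract_linearEquiv_of_leftInverse T
    (postcompHom_bijective_of_inAdd SD T hW hW) F G hGF
  exact ⟨X, ⟨_, h.i, h.r, h.retract⟩, hM⟩

end AddSerre

end SerreDuality

open SerreDuality in
/-- The functor `𝒯(T,-)` restricts to an equivalence `add (ST) ≃ inj (mod Γ)`: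
it is fully faithful on `add (ST)` (via `Γ`-linear maps), sends objects of `add (ST)` to
finite injective `Γ`-modules, and every finite injective `Γ`-module is isomorphic to the
image of an object of `add (ST)`. -/
theorem homFunctor_equiv_add_ST_inj
    (k 𝒯 : Type) [Field k] [Category.{0} 𝒯] [Preadditive 𝒯] [CategoryTheory.Linear k 𝒯]
    [HasFiniteBiproducts 𝒯] [IsIdempotentComplete 𝒯]
    (hfin : HomFinite k 𝒯) (SD : SerreData k 𝒯) (T : 𝒯) :
    (∀ X Y : 𝒯, InAdd 𝒯 (SD.S.obj T) X → InAdd 𝒯 (SD.S.obj T) Y →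
      Function.Bijective (fun f : X ⟶ Y => postcompHom 𝒯 T f)) ∧
    (∀ X : 𝒯, InAdd 𝒯 (SD.S.obj T) X →
      Module.Finite (End T)ᵐᵒᵖ (T ⟶ X) ∧ Module.Injective (End T)ᵐᵒᵖ (T ⟶ X)) ∧
    (∀ M : ModuleCat (End T)ᵐᵒᵖ, Module.Finite (End T)ᵐᵒᵖ M →
      Module.Injective (End T)ᵐᵒᵖ M →
      ∃ X : 𝒯, InAdd 𝒯 (SD.S.obj T) X ∧ Nonempty (M ≅ homMod 𝒯 T X)) := by
  have := hfin T T
  refine ⟨fun X Y hX hY => postcompHom_bijective_of_inAdd SD T hX hY,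
    fun X hX => ⟨?_, injective_hom_of_inAdd SD T hX⟩, fun M _ _ => ?_⟩
  · have := hfin T X
    exact .of_restrictScalars_finite k _ _
  · obtain ⟨X, hX, ⟨e⟩⟩ := exists_inAdd_linearEquiv_of_injective SD T M
    exact ⟨X, hX, ⟨e.toModuleIso⟩⟩
end
end

section
/- Let 𝒯 be a k-linear Hom-finite category with Serre functor S, T ∈ 𝒯, Γ = End_𝒯(T). For every T′ ∈ add(T) and X ∈ 𝒯, the map 𝒯(X, ST′) → Hom_Γ(𝒯(T,X), 𝒯(T,ST′)) induced by the functor 𝒯(T,−) is bijective. -/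
/-! Write `𝟙 T' = ∑ i, p i ≫ q i` with `p i : T' ⟶ T` and `q i : T ⟶ T'`. Naturality of the Serre
pairing then gives `⟨g, b⟩ = ∑ i, ⟨(q i ≫ b) ≫ g, p i⟩` for `g : Y ⟶ S T'` and `b : T' ⟶ Y`, so a
morphism `X ⟶ S T'` is determined by its composites with morphisms out of `T`. Conversely a
`Γ`-linear `φ` defines the functional `b ↦ ∑ i, ⟨φ (q i ≫ b), p i⟩` on `𝒯(T', X)`; its Serre dual
`f : X ⟶ S T'` satisfies `a ≫ f = φ a`, because `Γ`-linearity lets `q i ≫ u ∈ Γ` pass through `φ`. -/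

noncomputable section
open CategoryTheory CategoryTheory.Limits

variable (k : Type) [Field k]
variable (𝒯 : Type) [Category.{0} 𝒯] [Preadditive 𝒯]

section

variable {𝒯}

instance endOppositeModule.isScalarTower (R : Type) [CommSemiring R] [CategoryTheory.Linear R 𝒯]
    (T X : 𝒯) : IsScalarTower R (End T)ᵐᵒᵖ (T ⟶ X) where
  smul_assoc _ _ _ := Linear.smul_comp _ _ _ _ _ _

theorem InAdd.exists_sum_comp_eq_id [HasFiniteBiproducts 𝒯] {T T' : 𝒯} (h : InAdd 𝒯 T T') :
    ∃ (n : ℕ) (p : Fin n → (T' ⟶ T)) (q : Fin n → (T ⟶ T')), ∑ i, p i ≫ q i = 𝟙 T' := by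
  obtain ⟨n, s, r, hsr⟩ := h
  let F : Fin n → 𝒯 := fun _ => T
  refine ⟨n, fun i => s ≫ biproduct.π F i, fun i => biproduct.ι F i ≫ r, ?_⟩
  calc ∑ i, (s ≫ biproduct.π F i) ≫ biproduct.ι F i ≫ r
      = s ≫ (∑ i, biproduct.π F i ≫ biproduct.ι F i) ≫ r := by
        simp only [Preadditive.comp_sum, Preadditive.sum_comp, Category.assoc]
    _ = 𝟙 T' := by rw [biproduct.total, Category.id_comp, hsr]

end

namespace SerreData

variable {k 𝒯} [CategoryTheory.Linear k 𝒯] (SD : SerreData k 𝒯)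
variable {ι : Type} [Fintype ι] {T T' : 𝒯} {p : ι → (T' ⟶ T)} {q : ι → (T ⟶ T')}

theorem ε_apply_eq_sum (hpq : ∑ i, p i ≫ q i = 𝟙 T') {Y : 𝒯} (g : Y ⟶ SD.S.obj T')
    (b : T' ⟶ Y) : SD.ε T' Y g b = ∑ i, SD.ε T' T ((q i ≫ b) ≫ g) (p i) := by
  calc SD.ε T' Y g b = SD.ε T' Y g (∑ i, p i ≫ q i ≫ b) := by
        simp only [← Category.assoc, ← Preadditive.sum_comp, hpq, Category.id_comp]
    _ = _ := by
        rw [map_sum]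
        exact Finset.sum_congr rfl fun i _ => (SD.nat_left _ _ _).symm

theorem postcompHom_injective (hpq : ∑ i, p i ≫ q i = 𝟙 T') (X : 𝒯) :
    Function.Injective (fun f : X ⟶ SD.S.obj T' => postcompHom 𝒯 T f) := by
  intro f f' h
  have hpost (a : T ⟶ X) : a ≫ f = a ≫ f' := LinearMap.congr_fun h a
  apply (SD.ε T' X).injective
  ext b
  rw [SD.ε_apply_eq_sum hpq, SD.ε_apply_eq_sum hpq]
  simp only [hpost]

theorem postcompHom_surjective (hpq : ∑ i, p i ≫ q i = 𝟙 T') (X : 𝒯) :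
    Function.Surjective (fun f : X ⟶ SD.S.obj T' => postcompHom 𝒯 T f) := by
  intro φ
  let η : Module.Dual k (T' ⟶ X) := ∑ i, Module.Dual.eval k _ (p i) ∘ₗ
    (SD.ε T' T).toLinearMap ∘ₗ φ.restrictScalars k ∘ₗ Linear.leftComp k X (q i)
  refine ⟨(SD.ε T' X).symm η, LinearMap.ext fun a => (SD.ε T' T).injective ?_⟩
  ext u
  have hφ (i : ι) : φ ((q i ≫ u) ≫ a) = (q i ≫ u) ≫ φ a :=
    φ.map_smul (MulOpposite.op (q i ≫ u)) a
  change SD.ε T' T (a ≫ _) u = _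
  rw [SD.nat_left, LinearEquiv.apply_symm_apply, SD.ε_apply_eq_sum hpq (φ a) u]
  simp [η, ← Category.assoc, hφ]

end SerreData

theorem hom_into_serre_add_bijective_general
    (k 𝒯 : Type) [Field k] [Category.{0} 𝒯] [Preadditive 𝒯] [CategoryTheory.Linear k 𝒯]
    [HasFiniteBiproducts 𝒯]
    (SD : SerreData k 𝒯) (T T' X : 𝒯) (hT' : InAdd 𝒯 T T') :
    Function.Bijective (fun f : X ⟶ SD.S.obj T' => postcompHom 𝒯 T f) := by
  obtain ⟨n, p, q, hpq⟩ := hT'.exists_sum_comp_eq_id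
  exact ⟨SD.postcompHom_injective hpq X, SD.postcompHom_surjective hpq X⟩

/-- For `T' ∈ add T` and any `X`, the map
`𝒯(X, ST') → Hom_Γ(𝒯(T,X), 𝒯(T,ST'))`, `f ↦ (a ↦ a ≫ f)`, is bijective. -/
theorem hom_into_serre_add_bijective
    (k 𝒯 : Type) [Field k] [Category.{0} 𝒯] [Preadditive 𝒯] [CategoryTheory.Linear k 𝒯]
    [HasFiniteBiproducts 𝒯]
    (hfin : HomFinite k 𝒯) (SD : SerreData k 𝒯) (T T' X : 𝒯) (hT' : InAdd 𝒯 T T') :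
    Function.Bijective (fun f : X ⟶ SD.S.obj T' => postcompHom 𝒯 T f) :=
  hom_into_serre_add_bijective_general k 𝒯 SD T T' X hT'
end
end

section
/- Let 𝒯 be a k-linear Hom-finite category with weak kernels and weak cokernels, T ∈ 𝒯 with Γ = End_𝒯(T), and suppose 𝒯 has a Serre functor. Then the essential image 𝒟 of the functor 𝒯(T,−) : 𝒯 → mod Γ is a functorially finite subcategory of mod Γ. -/
noncomputable section
open CategoryTheory CategoryTheory.Limits

variable (k : Type) [Field k]
variable (𝒯 : Type) [Category.{0} 𝒯] [Preadditive 𝒯]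

/-!
Write `Γ = (End T)ᵐᵒᵖ` and `Tⁿ` for a finite direct sum of copies of `T`. A finitely generated
`Γ`-module `M` has a presentation `𝒯(T, Tᵖ) → 𝒯(T, Tⁿ) → M → 0` induced by some `φ : Tᵖ ⟶ Tⁿ`
(the kernel is finite dimensional over `k`). By Yoneda every `Γ`-linear map out of `𝒯(T, Tⁿ)` into
`𝒯(T, Y)` is postcomposition with a morphism, so `M → 𝒯(T, C)` induced by a weak cokernel
`Tⁿ ⟶ C` of `φ` is a left approximation.

Dually, Serre duality identifies `𝒯(T, S Tⁿ)` with `D(Γⁿ)`, so `M` has a copresentation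
`0 → M → 𝒯(T, S Tⁿ) → 𝒯(T, S Tᵖ)` induced by some `S ψ`, every `Γ`-linear map from `𝒯(T, X)` into
`𝒯(T, S Tⁿ)` is postcomposition with a morphism, and the image under the equivalence `S` of a weak
kernel of `ψ` yields a right approximation.
-/

variable {k 𝒯}

theorem smul_hom_eq_comp {T X : 𝒯} (m : (End T)ᵐᵒᵖ) (a : T ⟶ X) : m • a = m.unop ≫ a := rfl

theorem op_mul_eq_op_comp {𝒞 : Type*} [Category 𝒞] {T : 𝒞} (a : T ⟶ T) (γ : (End T)ᵐᵒᵖ) :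
    (.op a : (End T)ᵐᵒᵖ) * γ = .op (a ≫ γ.unop) :=
  rfl

@[simp]
theorem postcompHom_apply {T X Y : 𝒯} (f : X ⟶ Y) (a : T ⟶ X) : postcompHom 𝒯 T f a = a ≫ f :=
  rfl

theorem LinearMap.map_end_comp {T X Y : 𝒯} (χ : (T ⟶ X) →ₗ[(End T)ᵐᵒᵖ] (T ⟶ Y))
    (t : T ⟶ T) (a : T ⟶ X) : χ (t ≫ a) = t ≫ χ a :=
  χ.map_smul (.op t) a

instance isScalarTower_hom [Linear k 𝒯] (T X : 𝒯) : IsScalarTower k (End T)ᵐᵒᵖ (T ⟶ X) :=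
  ⟨fun c m a => Linear.smul_comp _ _ _ c m.unop a⟩

theorem LinearMap.exists_comp_eq_of_surjective_of_ker_le {R P M N : Type*} [Ring R]
    [AddCommGroup P] [AddCommGroup M] [AddCommGroup N] [Module R P] [Module R M] [Module R N]
    {π : P →ₗ[R] M} (hπ : Function.Surjective π) {ψ : P →ₗ[R] N} (h : ker π ≤ ker ψ) :
    ∃ f : M →ₗ[R] N, f ∘ₗ π = ψ :=
  ⟨(ker π).liftQ ψ h ∘ₗ (π.quotKerEquivOfSurjective hπ).symm.toLinearMap, by
    ext x
    simp⟩

theorem LinearMap.exists_comp_eq_of_injective_of_range_le {R P M N : Type*} [Ring R]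
    [AddCommGroup P] [AddCommGroup M] [AddCommGroup N] [Module R P] [Module R M] [Module R N]
    {j : M →ₗ[R] N} (hj : Function.Injective j) {ψ : P →ₗ[R] N} (h : range ψ ≤ range j) :
    ∃ f : P →ₗ[R] M, j ∘ₗ f = ψ :=
  ⟨(LinearEquiv.ofInjective j hj).symm.toLinearMap ∘ₗ ψ.codRestrict (range j) fun x => h ⟨x, rfl⟩,
    by ext x; simp⟩

section Biproduct

variable [HasFiniteBiproducts 𝒯]

def homBiproductEquiv (T : 𝒯) (n : ℕ) :
    (T ⟶ ⨁ fun _ : Fin n => T) ≃ₗ[(End T)ᵐᵒᵖ] (Fin n → (End T)ᵐᵒᵖ) where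
  toFun a i := .op (a ≫ biproduct.π _ i)
  invFun v := biproduct.lift fun i => (v i).unop
  map_add' a b := by ext i; simp [Preadditive.add_comp]
  map_smul' m a := by ext i; simp only [smul_hom_eq_comp, Category.assoc]; rfl
  left_inv a := by ext; simp
  right_inv v := by ext; simp

theorem homBiproductEquiv_symm_single (T : 𝒯) {n : ℕ} (i : Fin n) :
    (homBiproductEquiv T n).symm (Pi.single i 1) = biproduct.ι (fun _ : Fin n => T) i := by
  ext j
  by_cases h : i = j
  · subst h; simp [homBiproductEquiv]
  · simp [homBiproductEquiv, h, biproduct.ι_π_ne _ h]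

theorem postcompHom_biproductDesc {T Y : 𝒯} {n : ℕ} (y : Fin n → (T ⟶ Y)) :
    postcompHom 𝒯 T (biproduct.desc y) =
      Fintype.linearCombination (End T)ᵐᵒᵖ y ∘ₗ (homBiproductEquiv T n).toLinearMap := by
  ext a
  simp [postcompHom, homBiproductEquiv, Fintype.linearCombination_apply, biproduct.desc_eq,
    Preadditive.comp_sum, smul_hom_eq_comp]

theorem range_postcompHom_biproductDesc {T Y : 𝒯} {n : ℕ} (y : Fin n → (T ⟶ Y)) :
    LinearMap.range (postcompHom 𝒯 T (biproduct.desc y)) =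
      Submodule.span (End T)ᵐᵒᵖ (Set.range y) := by
  rw [postcompHom_biproductDesc, LinearMap.range_comp_of_range_eq_top _ (LinearEquiv.range _),
    Fintype.range_linearCombination]

theorem eq_postcompHom_biproductDesc {T Y : 𝒯} {n : ℕ}
    (χ : (T ⟶ ⨁ fun _ : Fin n => T) →ₗ[(End T)ᵐᵒᵖ] (T ⟶ Y)) :
    χ = postcompHom 𝒯 T (biproduct.desc fun i => χ (biproduct.ι (fun _ : Fin n => T) i)) := by
  rw [postcompHom_biproductDesc, ← LinearEquiv.comp_toLinearMap_symm_eq]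
  refine LinearMap.pi_ext' fun i => LinearMap.ext_ring ?_
  simp [homBiproductEquiv_symm_single]

theorem biproduct_eq_zero_of_forall_comp_eq_zero {T Y : 𝒯} {n : ℕ}
    {f : (⨁ fun _ : Fin n => T) ⟶ Y} (h : ∀ a : T ⟶ ⨁ fun _ : Fin n => T, a ≫ f = 0) :
    f = 0 :=
  biproduct.hom_ext' _ _ fun i => by simpa using h (biproduct.ι (fun _ : Fin n => T) i)

end Biproduct

def IsWeakCokernel {𝒞 : Type*} [Category 𝒞] [HasZeroMorphisms 𝒞] {A B C : 𝒞} (f : A ⟶ B)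
    (g : B ⟶ C) : Prop :=
  f ≫ g = 0 ∧ ∀ (Y : 𝒞) (h : B ⟶ Y), f ≫ h = 0 → ∃ u : C ⟶ Y, h = g ≫ u

def IsWeakKernel {𝒞 : Type*} [Category 𝒞] [HasZeroMorphisms 𝒞] {A B C : 𝒞} (f : A ⟶ B)
    (g : C ⟶ A) : Prop :=
  g ≫ f = 0 ∧ ∀ (Y : 𝒞) (h : Y ⟶ A), h ≫ f = 0 → ∃ u : Y ⟶ C, h = u ≫ g

theorem IsWeakKernel.map {𝒞 𝒟 : Type*} [Category 𝒞] [Category 𝒟] [HasZeroMorphisms 𝒞]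
    [HasZeroMorphisms 𝒟] {A B C : 𝒞} {f : A ⟶ B} {g : C ⟶ A} (hg : IsWeakKernel f g)
    (F : 𝒞 ⥤ 𝒟) [F.IsEquivalence] : IsWeakKernel (F.map f) (F.map g) := by
  refine ⟨by rw [← F.map_comp, hg.1, F.map_zero], fun Y h hh => ?_⟩
  let e := F.objObjPreimageIso Y
  have hψ : F.preimage (e.hom ≫ h) ≫ f = 0 :=
    F.map_injective (by simp [hh])
  obtain ⟨u, hu⟩ := hg.2 _ _ hψ
  refine ⟨e.inv ≫ F.map u, ?_⟩
  rw [Category.assoc, ← F.map_comp, ← hu, F.map_preimage, Iso.inv_hom_id_assoc]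

section LeftApproximation

variable [HasFiniteBiproducts 𝒯]

theorem exists_presentation [Linear k 𝒯] (hfin : HomFinite k 𝒯) (T : 𝒯) (M : Type*)
    [AddCommGroup M] [Module (End T)ᵐᵒᵖ M] [Module.Finite (End T)ᵐᵒᵖ M] :
    ∃ (n p : ℕ) (φ : (⨁ fun _ : Fin p => T) ⟶ ⨁ fun _ : Fin n => T)
      (π : (T ⟶ ⨁ fun _ : Fin n => T) →ₗ[(End T)ᵐᵒᵖ] M),
      Function.Surjective π ∧ LinearMap.ker π = LinearMap.range (postcompHom 𝒯 T φ) := by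
  obtain ⟨n, π₀, hπ₀⟩ := Module.Finite.exists_fin' (End T)ᵐᵒᵖ M
  let π := π₀ ∘ₗ (homBiproductEquiv T n).toLinearMap
  have : FiniteDimensional k (T ⟶ ⨁ fun _ : Fin n => T) := hfin _ _
  have : IsNoetherian (End T)ᵐᵒᵖ (T ⟶ ⨁ fun _ : Fin n => T) :=
    isNoetherian_of_tower k inferInstance
  obtain ⟨p, y, hy⟩ :=
    Submodule.fg_iff_exists_fin_generating_family.mp (IsNoetherian.noetherian (LinearMap.ker π))
  exact ⟨n, p, biproduct.desc y, π, hπ₀.comp (LinearEquiv.surjective _),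
    by rw [range_postcompHom_biproductDesc, hy]⟩

theorem exists_leftApprox_of_presentation {T : 𝒯} {M : Type*} [AddCommGroup M]
    [Module (End T)ᵐᵒᵖ M] {n p : ℕ} {φ : (⨁ fun _ : Fin p => T) ⟶ ⨁ fun _ : Fin n => T}
    {π : (T ⟶ ⨁ fun _ : Fin n => T) →ₗ[(End T)ᵐᵒᵖ] M} (hπ : Function.Surjective π)
    (hker : LinearMap.ker π = LinearMap.range (postcompHom 𝒯 T φ))
    {C : 𝒯} {g : (⨁ fun _ : Fin n => T) ⟶ C} (hg : IsWeakCokernel φ g) :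
    ∃ f : M →ₗ[(End T)ᵐᵒᵖ] (T ⟶ C), ∀ (Y : 𝒯) (g' : M →ₗ[(End T)ᵐᵒᵖ] (T ⟶ Y)),
      ∃ u : C ⟶ Y, postcompHom 𝒯 T u ∘ₗ f = g' := by
  have hle : LinearMap.ker π ≤ LinearMap.ker (postcompHom 𝒯 T g) := by
    rw [hker]
    rintro _ ⟨a, rfl⟩
    simp [hg.1]
  obtain ⟨f, hf⟩ := LinearMap.exists_comp_eq_of_surjective_of_ker_le hπ hle
  refine ⟨f, fun Y g' => ?_⟩
  have hh₀ := eq_postcompHom_biproductDesc (g' ∘ₗ π)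
  set h₀ := biproduct.desc fun i => (g' ∘ₗ π) (biproduct.ι (fun _ : Fin n => T) i)
  have hφh₀ : φ ≫ h₀ = 0 := biproduct_eq_zero_of_forall_comp_eq_zero fun a => by
    have ha : π (a ≫ φ) = 0 := (hker ▸ ⟨a, rfl⟩ : a ≫ φ ∈ LinearMap.ker π)
    have hga : g' (π (a ≫ φ)) = (a ≫ φ) ≫ h₀ := LinearMap.congr_fun hh₀ (a ≫ φ)
    rw [← Category.assoc, ← hga, ha, map_zero]
  obtain ⟨u, hu⟩ := hg.2 Y h₀ hφh₀
  refine ⟨u, (LinearMap.cancel_right hπ).mp ?_⟩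
  rw [LinearMap.comp_assoc, hf, hh₀, hu]
  ext a
  simp

theorem exists_leftApprox [Linear k 𝒯] (hfin : HomFinite k 𝒯)
    (hwcok : ∀ {A B : 𝒯} (f : A ⟶ B), ∃ (C : 𝒯) (g : B ⟶ C), IsWeakCokernel f g)
    (T : 𝒯) (M : Type*) [AddCommGroup M] [Module (End T)ᵐᵒᵖ M] [Module.Finite (End T)ᵐᵒᵖ M] :
    ∃ (C : 𝒯) (f : M →ₗ[(End T)ᵐᵒᵖ] (T ⟶ C)), ∀ (Y : 𝒯) (g : M →ₗ[(End T)ᵐᵒᵖ] (T ⟶ Y)),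
      ∃ u : C ⟶ Y, postcompHom 𝒯 T u ∘ₗ f = g := by
  obtain ⟨n, p, φ, π, hπ, hker⟩ := exists_presentation hfin T M
  obtain ⟨C, g, hg⟩ := hwcok φ
  exact ⟨C, exists_leftApprox_of_presentation hπ hker hg⟩

end LeftApproximation

section RightApproximation

variable [Linear k 𝒯] [HasFiniteBiproducts 𝒯]

namespace SerreData

variable (SD : SerreData k 𝒯)

theorem ε_apply_eq_sum_s9 {T Y : 𝒯} {n : ℕ} (z : Y ⟶ SD.S.obj (⨁ fun _ : Fin n => T))
    (f : (⨁ fun _ : Fin n => T) ⟶ Y) :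
    SD.ε _ Y z f = ∑ i, SD.ε _ T ((biproduct.ι (fun _ : Fin n => T) i ≫ f) ≫ z)
      (biproduct.π (fun _ : Fin n => T) i) := by
  simp_rw [SD.nat_left, ← map_sum, ← Category.assoc, ← Preadditive.sum_comp, biproduct.total,
    Category.id_comp]

theorem eq_zero_of_forall_comp_eq_zero {T X : 𝒯} {n : ℕ}
    {v : X ⟶ SD.S.obj (⨁ fun _ : Fin n => T)} (h : ∀ a : T ⟶ X, a ≫ v = 0) : v = 0 := by
  apply (SD.ε _ X).injective
  ext f
  simp only [ε_apply_eq_sum_s9, h, map_zero, LinearMap.zero_apply, Finset.sum_const_zero]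

theorem exists_eq_postcompHom {T X : 𝒯} {n : ℕ}
    (χ : (T ⟶ X) →ₗ[(End T)ᵐᵒᵖ] (T ⟶ SD.S.obj (⨁ fun _ : Fin n => T))) :
    ∃ v : X ⟶ SD.S.obj (⨁ fun _ : Fin n => T), χ = postcompHom 𝒯 T v := by
  let Λ : Module.Dual k ((⨁ fun _ : Fin n => T) ⟶ X) :=
    { toFun b := ∑ i, SD.ε _ T (χ (biproduct.ι (fun _ : Fin n => T) i ≫ b))
        (biproduct.π (fun _ : Fin n => T) i)
      map_add' b b' := by simp [Finset.sum_add_distrib]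
      map_smul' c b := by simp [Finset.mul_sum] }
  refine ⟨(SD.ε _ X).symm Λ, LinearMap.ext fun a => (SD.ε _ T).injective ?_⟩
  ext f
  rw [postcompHom_apply, SD.nat_left, LinearEquiv.apply_symm_apply, ε_apply_eq_sum_s9]
  simp_rw [← LinearMap.map_end_comp]
  simp [Λ]

/-- Under `𝒯(T, S Tⁿ) ≃ D 𝒯(Tⁿ, T) ≃ D(Γⁿ)`, the map `M → D(Γⁿ)` adjoint to the functionals `ξ`. -/
def ofDual (T : 𝒯) {M : Type*} [AddCommGroup M] [Module (End T)ᵐᵒᵖ M] [Module k M]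
    [IsScalarTower k (End T)ᵐᵒᵖ M] {n : ℕ} (ξ : Fin n → Module.Dual k M) :
    M →ₗ[(End T)ᵐᵒᵖ] (T ⟶ SD.S.obj (⨁ fun _ : Fin n => T)) where
  toFun x := (SD.ε _ T).symm
    { toFun f := ∑ i, ξ i ((.op (biproduct.ι (fun _ : Fin n => T) i ≫ f) : (End T)ᵐᵒᵖ) • x)
      map_add' f f' := by simp [Preadditive.comp_add, add_smul, Finset.sum_add_distrib]
      map_smul' c f := by simp [Linear.comp_smul, Finset.mul_sum] }
  map_add' x y := by
    apply (SD.ε _ T).injective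
    ext f
    simp [Finset.sum_add_distrib]
  map_smul' γ x := by
    apply (SD.ε _ T).injective
    ext f
    simp [smul_hom_eq_comp, SD.nat_left, ← mul_smul, op_mul_eq_op_comp]

theorem ε_ofDual_apply_π (T : 𝒯) {M : Type*} [AddCommGroup M] [Module (End T)ᵐᵒᵖ M]
    [Module k M] [IsScalarTower k (End T)ᵐᵒᵖ M] {n : ℕ} (ξ : Fin n → Module.Dual k M) (x : M)
    (i : Fin n) : SD.ε _ T (SD.ofDual T ξ x) (biproduct.π (fun _ : Fin n => T) i) = ξ i x := by
  simp only [ofDual, LinearMap.coe_mk, AddHom.coe_mk, LinearEquiv.apply_symm_apply]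
  rw [Finset.sum_eq_single i]
  · rw [biproduct.ι_π_self]
    exact congr_arg (ξ i) (one_smul _ x)
  · intro j _ hji
    simp [biproduct.ι_π_ne _ hji]
  · simp

theorem exists_injective_linearMap (hfin : HomFinite k 𝒯) (T : 𝒯) (M : Type*) [AddCommGroup M]
    [Module (End T)ᵐᵒᵖ M] [Module k M] [IsScalarTower k (End T)ᵐᵒᵖ M]
    [Module.Finite (End T)ᵐᵒᵖ M] :
    ∃ (n : ℕ) (j : M →ₗ[(End T)ᵐᵒᵖ] (T ⟶ SD.S.obj (⨁ fun _ : Fin n => T))),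
      Function.Injective j := by
  have : Module.Finite k (End T) := hfin T T
  have : Module.Finite k M := Module.Finite.trans (End T)ᵐᵒᵖ M
  let b := Module.finBasis k M
  refine ⟨_, SD.ofDual T b.coord, (injective_iff_map_eq_zero _).mpr fun x hx => ?_⟩
  refine b.forall_coord_eq_zero_iff.mp fun i => ?_
  rw [← SD.ε_ofDual_apply_π T b.coord x i, hx, map_zero, LinearMap.zero_apply]

theorem exists_copresentation (hfin : HomFinite k 𝒯) (T : 𝒯) (M : Type*) [AddCommGroup M]
    [Module (End T)ᵐᵒᵖ M] [Module k M] [IsScalarTower k (End T)ᵐᵒᵖ M]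
    [Module.Finite (End T)ᵐᵒᵖ M] :
    ∃ (n p : ℕ) (ψ : (⨁ fun _ : Fin n => T) ⟶ ⨁ fun _ : Fin p => T)
      (j : M →ₗ[(End T)ᵐᵒᵖ] (T ⟶ SD.S.obj (⨁ fun _ : Fin n => T))),
      Function.Injective j ∧ LinearMap.range j = LinearMap.ker (postcompHom 𝒯 T (SD.S.map ψ)) := by
  obtain ⟨n, j, hj⟩ := SD.exists_injective_linearMap hfin T M
  have : FiniteDimensional k (T ⟶ SD.S.obj (⨁ fun _ : Fin n => T)) := hfin _ _
  have : Module.Finite (End T)ᵐᵒᵖ (T ⟶ SD.S.obj (⨁ fun _ : Fin n => T)) :=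
    Module.Finite.of_restrictScalars_finite k _ _
  obtain ⟨p, j', hj'⟩ := SD.exists_injective_linearMap hfin T (_ ⧸ LinearMap.range j)
  obtain ⟨v, hv⟩ := SD.exists_eq_postcompHom (j' ∘ₗ (LinearMap.range j).mkQ)
  have := SD.equiv
  refine ⟨n, p, SD.S.preimage v, j, hj, ?_⟩
  rw [SD.S.map_preimage, ← hv, LinearMap.ker_comp, LinearMap.ker_eq_bot.mpr hj',
    Submodule.comap_bot, Submodule.ker_mkQ]

theorem exists_rightApprox_of_copresentation {T : 𝒯} {M : Type*} [AddCommGroup M]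
    [Module (End T)ᵐᵒᵖ M] {n p : ℕ} {ψ : (⨁ fun _ : Fin n => T) ⟶ ⨁ fun _ : Fin p => T}
    {j : M →ₗ[(End T)ᵐᵒᵖ] (T ⟶ SD.S.obj (⨁ fun _ : Fin n => T))} (hj : Function.Injective j)
    (hrange : LinearMap.range j = LinearMap.ker (postcompHom 𝒯 T (SD.S.map ψ)))
    {C : 𝒯} {w : C ⟶ ⨁ fun _ : Fin n => T} (hw : IsWeakKernel ψ w) :
    ∃ f : (T ⟶ SD.S.obj C) →ₗ[(End T)ᵐᵒᵖ] M, ∀ (X : 𝒯) (g : (T ⟶ X) →ₗ[(End T)ᵐᵒᵖ] M),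
      ∃ u : X ⟶ SD.S.obj C, f ∘ₗ postcompHom 𝒯 T u = g := by
  have := SD.equiv
  have hSw := hw.map SD.S
  have hle : LinearMap.range (postcompHom 𝒯 T (SD.S.map w)) ≤ LinearMap.range j := by
    rw [hrange]
    rintro _ ⟨a, rfl⟩
    simp [hSw.1]
  obtain ⟨f, hf⟩ := LinearMap.exists_comp_eq_of_injective_of_range_le hj hle
  refine ⟨f, fun X g => ?_⟩
  obtain ⟨u₀, hu₀⟩ := SD.exists_eq_postcompHom (j ∘ₗ g)
  have hu₀ψ : u₀ ≫ SD.S.map ψ = 0 := SD.eq_zero_of_forall_comp_eq_zero fun a => by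
    have hga : j (g a) ∈ LinearMap.ker (postcompHom 𝒯 T (SD.S.map ψ)) := hrange ▸ ⟨g a, rfl⟩
    have hja : j (g a) = a ≫ u₀ := LinearMap.congr_fun hu₀ a
    rwa [← Category.assoc, ← hja]
  obtain ⟨u, hu⟩ := hSw.2 X u₀ hu₀ψ
  refine ⟨u, hj.injective_linearMapComp_left ?_⟩
  change j ∘ₗ f ∘ₗ _ = j ∘ₗ g
  rw [← LinearMap.comp_assoc, hf, hu₀, hu]
  ext a
  simp

end SerreData

theorem exists_rightApprox (hfin : HomFinite k 𝒯) (SD : SerreData k 𝒯)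
    (hwker : ∀ {A B : 𝒯} (f : A ⟶ B), ∃ (C : 𝒯) (g : C ⟶ A), IsWeakKernel f g)
    (T : 𝒯) (M : Type*) [AddCommGroup M] [Module (End T)ᵐᵒᵖ M] [Module k M]
    [IsScalarTower k (End T)ᵐᵒᵖ M] [Module.Finite (End T)ᵐᵒᵖ M] :
    ∃ (C : 𝒯) (f : (T ⟶ C) →ₗ[(End T)ᵐᵒᵖ] M), ∀ (X : 𝒯) (g : (T ⟶ X) →ₗ[(End T)ᵐᵒᵖ] M),
      ∃ u : X ⟶ C, f ∘ₗ postcompHom 𝒯 T u = g := by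
  obtain ⟨n, p, ψ, j, hj, hrange⟩ := SD.exists_copresentation hfin T M
  obtain ⟨C, w, hw⟩ := hwker ψ
  exact ⟨SD.S.obj C, SD.exists_rightApprox_of_copresentation hj hrange hw⟩

end RightApproximation

theorem exists_essIm_leftApprox {T : 𝒯} {M : ModuleCat (End T)ᵐᵒᵖ} {C : 𝒯}
    (f : M →ₗ[(End T)ᵐᵒᵖ] (T ⟶ C))
    (hf : ∀ (Y : 𝒯) (g : M →ₗ[(End T)ᵐᵒᵖ] (T ⟶ Y)), ∃ u : C ⟶ Y, postcompHom 𝒯 T u ∘ₗ f = g) :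
    ∃ A ∈ EssIm 𝒯 T, ∃ f : M ⟶ A, ∀ B ∈ EssIm 𝒯 T, ∀ g : M ⟶ B, ∃ h : A ⟶ B, f ≫ h = g := by
  refine ⟨homMod 𝒯 T C, ⟨C, ⟨Iso.refl _⟩⟩, ModuleCat.ofHom f, ?_⟩
  rintro B ⟨Y, ⟨e⟩⟩ g
  obtain ⟨u, hu⟩ := hf Y (g ≫ e.hom).hom
  refine ⟨ModuleCat.ofHom (postcompHom 𝒯 T u) ≫ e.inv, ?_⟩
  ext x
  have hx : e.inv.hom (f x ≫ u) = g.hom x := by simpa using congr(e.inv.hom ($hu x))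
  exact hx

theorem exists_essIm_rightApprox {T : 𝒯} {M : ModuleCat (End T)ᵐᵒᵖ} {C : 𝒯}
    (f : (T ⟶ C) →ₗ[(End T)ᵐᵒᵖ] M)
    (hf : ∀ (X : 𝒯) (g : (T ⟶ X) →ₗ[(End T)ᵐᵒᵖ] M), ∃ u : X ⟶ C, f ∘ₗ postcompHom 𝒯 T u = g) :
    ∃ A ∈ EssIm 𝒯 T, ∃ f : A ⟶ M, ∀ B ∈ EssIm 𝒯 T, ∀ g : B ⟶ M, ∃ h : B ⟶ A, h ≫ f = g := by
  refine ⟨homMod 𝒯 T C, ⟨C, ⟨Iso.refl _⟩⟩, ModuleCat.ofHom f, ?_⟩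
  rintro B ⟨X, ⟨e⟩⟩ g
  obtain ⟨u, hu⟩ := hf X (e.inv ≫ g).hom
  refine ⟨e.hom ≫ ModuleCat.ofHom (postcompHom 𝒯 T u), ?_⟩
  ext x
  have hx := LinearMap.congr_fun hu (e.hom.hom x)
  have he : e.inv.hom (e.hom.hom x) = x := congr($(e.hom_inv_id).hom x)
  exact hx.trans (congr_arg g.hom he)

/-- If `𝒯` has weak kernels and weak cokernels, then the essential image `𝒟` of
`𝒯(T,-)` is a functorially finite subcategory of `mod Γ`. -/
theorem ess_image_functorially_finite
    (k 𝒯 : Type) [Field k] [Category.{0} 𝒯] [Preadditive 𝒯] [CategoryTheory.Linear k 𝒯]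
    [HasFiniteBiproducts 𝒯]
    (hfin : HomFinite k 𝒯) (SD : SerreData k 𝒯)
    (hwcok : ∀ {A B : 𝒯} (f : A ⟶ B), ∃ (C : 𝒯) (g : B ⟶ C), f ≫ g = 0 ∧
      ∀ (Y : 𝒯) (h : B ⟶ Y), f ≫ h = 0 → ∃ u : C ⟶ Y, h = g ≫ u)
    (hwker : ∀ {A B : 𝒯} (f : A ⟶ B), ∃ (C : 𝒯) (g : C ⟶ A), g ≫ f = 0 ∧
      ∀ (Y : 𝒯) (h : Y ⟶ A), h ≫ f = 0 → ∃ u : Y ⟶ C, h = u ≫ g)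
    (T : 𝒯) :
    ∀ M : ModuleCat (End T)ᵐᵒᵖ, Module.Finite (End T)ᵐᵒᵖ M →
      (∃ A ∈ EssIm 𝒯 T, ∃ f : M ⟶ A,
        ∀ B ∈ EssIm 𝒯 T, ∀ g : M ⟶ B, ∃ h : A ⟶ B, f ≫ h = g) ∧
      (∃ A ∈ EssIm 𝒯 T, ∃ f : A ⟶ M,
        ∀ B ∈ EssIm 𝒯 T, ∀ g : B ⟶ M, ∃ h : B ⟶ A, h ≫ f = g) := by
  intro M hM
  let _ : Module k M := Module.compHom M (algebraMap k (End T)ᵐᵒᵖ)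
  have : IsScalarTower k (End T)ᵐᵒᵖ M := IsScalarTower.of_compHom k _ M
  obtain ⟨C, f, hf⟩ := exists_leftApprox hfin hwcok T M
  obtain ⟨C', f', hf'⟩ := exists_rightApprox hfin SD hwker T M
  exact ⟨exists_essIm_leftApprox f hf, exists_essIm_rightApprox f' hf'⟩
end
end

section
/- Let 𝒯 be a k-linear Hom-finite (d+2)-angulated category with split idempotents and Serre functor, and T ∈ 𝒯 satisfying condition (b): every indecomposable X with 𝒯(T,X) ≠ 0 admits a (d+2)-angle T_d → ⋯ → T₀ → X →^h Σ^d T_d with all T_i ∈ add T and 𝒯(T,h) = 0. Then the essential image 𝒟 of 𝒯(T,−) : 𝒯 → mod Γ is closed under direct summands. -/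
noncomputable section
open CategoryTheory CategoryTheory.Limits

variable (k : Type) [Field k]
variable (𝒯 : Type) [Category.{0} 𝒯] [Preadditive 𝒯]

section Auxiliary

variable {k} {𝒯}

/-- Lifting `Γ`-linear maps out of objects of `add T` to morphisms of `𝒯`. -/
lemma addLift [HasFiniteBiproducts 𝒯] {T Z X' : 𝒯} (h : InAdd 𝒯 T Z)
    (ψ : (T ⟶ Z) →ₗ[(End T)ᵐᵒᵖ] (T ⟶ X')) :
    ∃ u : Z ⟶ X', ∀ a : T ⟶ Z, ψ a = a ≫ u := by
  obtain ⟨n, s, r, hsr⟩ := h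
  have hsm : ∀ (m : T ⟶ T) (x : T ⟶ Z), ψ (m ≫ x) = m ≫ ψ x := fun m x =>
    ψ.map_smul (MulOpposite.op m) x
  refine ⟨s ≫ biproduct.desc (fun i => ψ (biproduct.ι (fun _ : Fin n => T) i ≫ r)),
    fun a => ?_⟩
  rw [← Category.assoc]
  have key : ∀ b : T ⟶ ⨁ (fun _ : Fin n => T),
      b ≫ biproduct.desc (fun i => ψ (biproduct.ι (fun _ : Fin n => T) i ≫ r)) = ψ (b ≫ r) := by
    intro b
    have hb : b ≫ biproduct.desc (fun i => ψ (biproduct.ι (fun _ : Fin n => T) i ≫ r))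
        = ∑ i : Fin n, (b ≫ biproduct.π (fun _ : Fin n => T) i) ≫
            ψ (biproduct.ι (fun _ : Fin n => T) i ≫ r) := by
      conv_lhs => rw [← Category.comp_id b, ← biproduct.total]
      rw [Preadditive.comp_sum, Preadditive.sum_comp]
      refine Finset.sum_congr rfl (fun i _ => ?_)
      simp [Category.assoc]
    rw [hb]
    have h2 : ∀ i : Fin n, (b ≫ biproduct.π (fun _ : Fin n => T) i) ≫
        ψ (biproduct.ι (fun _ : Fin n => T) i ≫ r)
        = ψ (((b ≫ biproduct.π (fun _ : Fin n => T) i) ≫ biproduct.ι (fun _ : Fin n => T) i) ≫ r) := by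
      intro i
      rw [← hsm]
      congr 1
      simp only [Category.assoc]
    rw [Finset.sum_congr rfl (fun i _ => h2 i), ← map_sum]
    congr 1
    calc ∑ i : Fin n, ((b ≫ biproduct.π (fun _ : Fin n => T) i) ≫ biproduct.ι (fun _ : Fin n => T) i) ≫ r
        = (∑ i : Fin n, b ≫ (biproduct.π (fun _ : Fin n => T) i ≫ biproduct.ι (fun _ : Fin n => T) i)) ≫ r := by
          rw [Preadditive.sum_comp]
          exact Finset.sum_congr rfl fun i _ => by simp [Category.assoc]
      _ = b ≫ r := by
          rw [← Preadditive.comp_sum, biproduct.total, Category.comp_id]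
  rw [key (a ≫ s), Category.assoc, hsr, Category.comp_id]

/-- A morphism out of an object of `add T` vanishing on all maps from `T` is zero. -/
lemma addZero [HasFiniteBiproducts 𝒯] {T Z X' : 𝒯} (h : InAdd 𝒯 T Z) {u : Z ⟶ X'}
    (hu : ∀ a : T ⟶ Z, a ≫ u = 0) : u = 0 := by
  obtain ⟨n, s, r, hsr⟩ := h
  have hru : r ≫ u = 0 := by
    refine biproduct.hom_ext' _ _ (fun i => ?_)
    rw [← Category.assoc, hu (biproduct.ι (fun _ : Fin n => T) i ≫ r), Limits.comp_zero]
  rw [← Category.id_comp u, ← hsr, Category.assoc, hru, Limits.comp_zero]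

/-- Factoring a linear functional through a linear map whose kernel it kills. -/
lemma dualFactor {K V₂ V₃ : Type} [Field K] [AddCommGroup V₂] [Module K V₂]
    [AddCommGroup V₃] [Module K V₃] (B : V₂ →ₗ[K] V₃) (θ : V₂ →ₗ[K] K)
    (h : ∀ x, B x = 0 → θ x = 0) : ∃ τ : V₃ →ₗ[K] K, ∀ x, τ (B x) = θ x := by
  have hk : LinearMap.ker B ≤ LinearMap.ker θ := fun x hx => h x hx
  have hinj : LinearMap.ker ((LinearMap.ker B).liftQ B le_rfl) = ⊥ :=
    Submodule.ker_liftQ_eq_bot _ _ _ le_rfl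
  obtain ⟨L, hL⟩ := ((LinearMap.ker B).liftQ B le_rfl).exists_leftInverse_of_injective hinj
  refine ⟨((LinearMap.ker B).liftQ θ hk).comp L, fun x => ?_⟩
  have h1 : L (B x) = Submodule.Quotient.mk x := by
    have h0 : B x = ((LinearMap.ker B).liftQ B le_rfl) (Submodule.Quotient.mk x) :=
      (Submodule.liftQ_apply _ _ _).symm
    rw [h0, ← LinearMap.comp_apply, hL, LinearMap.id_apply]
  rw [LinearMap.comp_apply, h1, Submodule.liftQ_apply]

/-- Contravariant exactness obtained from covariant exactness via the Serre functor. -/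
lemma serreFactor [CategoryTheory.Linear k 𝒯] (SD : SerreData k 𝒯) {Z₁ Z₂ Z₃ : 𝒯}
    (α : Z₁ ⟶ Z₂) (β : Z₂ ⟶ Z₃)
    (hex : ∀ W : 𝒯, Function.Exact (fun a : W ⟶ Z₁ => a ≫ α) (fun a : W ⟶ Z₂ => a ≫ β))
    {Y : 𝒯} (v : Z₂ ⟶ Y) (hv : α ≫ v = 0) : ∃ w : Z₃ ⟶ Y, β ≫ w = v := by
  haveI := SD.equiv
  obtain ⟨W, ⟨η⟩⟩ : ∃ W, Nonempty (SD.S.obj W ≅ Y) :=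
    ⟨SD.S.objPreimage Y, ⟨SD.S.objObjPreimageIso Y⟩⟩
  suffices h : ∃ w : Z₃ ⟶ SD.S.obj W, β ≫ w = v ≫ η.inv by
    obtain ⟨w, hw⟩ := h
    refine ⟨w ≫ η.hom, ?_⟩
    rw [← Category.assoc, hw, Category.assoc, η.inv_hom_id, Category.comp_id]
  have hv' : α ≫ v ≫ η.inv = 0 := by
    rw [← Category.assoc, hv, Limits.zero_comp]
  set θ : Module.Dual k (W ⟶ Z₂) := SD.ε W Z₂ (v ≫ η.inv) with hθdef
  have hθ : ∀ x : W ⟶ Z₂, x ≫ β = 0 → θ x = 0 := by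
    intro x hx
    obtain ⟨f, hf⟩ := (hex W x).mp hx
    have h1 : SD.ε W Z₁ (α ≫ v ≫ η.inv) f = SD.ε W Z₂ (v ≫ η.inv) (f ≫ α) :=
      SD.nat_left α (v ≫ η.inv) f
    rw [hv'] at h1
    simp only [map_zero, LinearMap.zero_apply] at h1
    rw [hθdef, ← hf]
    exact h1.symm
  obtain ⟨τ, hτ⟩ := dualFactor (Linear.rightComp k W β) θ (fun x hx => hθ x hx)
  refine ⟨(SD.ε W Z₃).symm τ, ?_⟩
  apply (SD.ε W Z₂).injective
  apply LinearMap.ext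
  intro f
  have h2 : SD.ε W Z₂ (β ≫ (SD.ε W Z₃).symm τ) f
      = SD.ε W Z₃ ((SD.ε W Z₃).symm τ) (f ≫ β) := SD.nat_left β _ f
  rw [h2, LinearEquiv.apply_symm_apply]
  exact hτ f

/-- Fitting-style lifting of idempotents along a ring homomorphism from a
finite-dimensional algebra. -/
lemma fittingLift {R S : Type} [Ring R] [Algebra k R] [FiniteDimensional k R] [Ring S]
    (π : R →+* S) (w : R) (he : π w * π w = π w) :
    ∃ f : R, f * f = f ∧ π f = π w := by
  classical
  obtain ⟨P, hP0, hPw⟩ : ∃ p : Polynomial k, p ≠ 0 ∧ Polynomial.aeval w p = 0 :=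
    (IsIntegral.of_finite k w).isAlgebraic
  set P₁ := Polynomial.X * P with hP₁def
  have hP₁0 : P₁ ≠ 0 := mul_ne_zero Polynomial.X_ne_zero hP0
  obtain ⟨Q, hfac, hndvd⟩ := P₁.exists_eq_pow_rootMultiplicity_mul_and_not_dvd hP₁0 0
  rw [Polynomial.C_0, sub_zero] at hfac hndvd
  set m := P₁.rootMultiplicity 0 with hmdef
  have hm1 : 1 ≤ m := by
    rw [hmdef, Polynomial.le_rootMultiplicity_iff hP₁0, Polynomial.C_0, sub_zero, pow_one]
    exact ⟨P, rfl⟩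
  have hcop : IsCoprime (Polynomial.X ^ m) Q :=
    (Polynomial.irreducible_X.coprime_iff_not_dvd.mpr hndvd).pow_left
  obtain ⟨a, b, hab⟩ := hcop
  have hP₁w : Polynomial.aeval w P₁ = 0 := by
    rw [hP₁def, map_mul, hPw, mul_zero]
  have hXmQ : Polynomial.aeval w (Polynomial.X ^ m * Q) = 0 := by
    rw [← hfac]; exact hP₁w
  refine ⟨Polynomial.aeval w (a * Polynomial.X ^ m), ?_, ?_⟩
  · have h2 : (a * Polynomial.X ^ m) * (a * Polynomial.X ^ m) - (a * Polynomial.X ^ m)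
        = (-(a * b)) * (Polynomial.X ^ m * Q) := by
      linear_combination (a * Polynomial.X ^ m) * hab
    have h3 : Polynomial.aeval w (a * Polynomial.X ^ m) * Polynomial.aeval w (a * Polynomial.X ^ m)
        - Polynomial.aeval w (a * Polynomial.X ^ m) = 0 := by
      rw [← map_mul, ← map_sub, h2, map_mul, hXmQ, mul_zero]
    exact sub_eq_zero.mp h3
  · set σ : Polynomial k →+* S := π.comp (Polynomial.aeval w).toRingHom with hσdef
    have hσX : σ Polynomial.X = π w := by
      simp [hσdef]
    have hσP₁ : σ P₁ = 0 := by
      have : σ P₁ = π (Polynomial.aeval w P₁) := rfl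
      rw [this, hP₁w, map_zero]
    have epow : ∀ j : ℕ, 1 ≤ j → (π w) ^ j = π w := by
      intro j hj
      induction j with
      | zero => omega
      | succ i ih =>
        rcases Nat.eq_or_lt_of_le hj with h | h
        · rw [← h, pow_one]
        · have hi : 1 ≤ i := by omega
          rw [pow_succ, ih hi, he]
    have hpoly : Polynomial.X ^ m = a * Polynomial.X ^ (2 * m) + b * P₁ := by
      rw [hfac]
      linear_combination (-(Polynomial.X ^ m) : Polynomial k) * hab
    have h4 := congrArg σ hpoly
    simp only [map_add, map_mul, map_pow, hσX, hσP₁, mul_zero, add_zero] at h4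
    rw [epow m hm1, epow (2 * m) (by omega)] at h4
    have h5 : π (Polynomial.aeval w (a * Polynomial.X ^ m)) = σ a * (π w) ^ m := by
      have : π (Polynomial.aeval w (a * Polynomial.X ^ m)) = σ (a * Polynomial.X ^ m) := rfl
      rw [this, map_mul, map_pow, hσX]
    rw [h5, epow m hm1]
    exact h4.symm

/-- Postcomposition, as a ring homomorphism to `Γ`-linear endomorphisms. -/
def postRing (T X : 𝒯) : End X →+* Module.End (End T)ᵐᵒᵖ (T ⟶ X) where
  toFun w := postcompHom 𝒯 T w
  map_one' := LinearMap.ext fun a => Category.comp_id a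
  map_mul' x y := LinearMap.ext fun a =>
    show a ≫ (y ≫ x) = (a ≫ y) ≫ x from (Category.assoc a y x).symm
  map_zero' := LinearMap.ext fun a => Limits.comp_zero
  map_add' x y := LinearMap.ext fun a => Preadditive.comp_add _ _ _ _ _ _

/-- Lifting `Γ`-linear maps out of the cone object of a condition-(b) angle. -/
lemma angleLift [CategoryTheory.Linear k 𝒯] [HasFiniteBiproducts 𝒯] {m : ℕ}
    (SD : SerreData k 𝒯) (A : Angulation 𝒯 (m + 1)) (T : 𝒯)
    (C : Candidate 𝒯 A.shift (m + 1)) (hC : A.IsAngle C)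
    (hadd : ∀ i, i ≤ m + 1 → InAdd 𝒯 T (C.obj i))
    (hconn : ∀ a : T ⟶ C.obj (m + 1 + 1), a ≫ C.conn = 0)
    (Y : 𝒯) (φ : (T ⟶ C.obj (m + 1 + 1)) →ₗ[(End T)ᵐᵒᵖ] (T ⟶ Y)) :
    ∃ g : C.obj (m + 1 + 1) ⟶ Y, ∀ a, φ a = a ≫ g := by
  obtain ⟨u, hu⟩ := addLift (hadd (m + 1) le_rfl)
    (φ.comp (postcompHom 𝒯 T (C.hom (m + 1))))
  have hu' : ∀ b : T ⟶ C.obj (m + 1), φ (b ≫ C.hom (m + 1)) = b ≫ u := fun b => hu b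
  have hzero : C.hom m ≫ u = 0 := by
    apply addZero (hadd m (by omega))
    intro a
    rw [← Category.assoc, ← hu' (a ≫ C.hom m), Category.assoc,
      A.comp_zero C hC m le_rfl, Limits.comp_zero, map_zero]
  obtain ⟨w, hw⟩ := serreFactor SD (C.hom m) (C.hom (m + 1))
    (fun W => A.hom_exact C hC W m le_rfl) u hzero
  refine ⟨w, fun a => ?_⟩
  obtain ⟨b, hb⟩ := (A.hom_exact_last C hC T a).mp (hconn a)
  rw [← hb, hu' b, ← hw, ← Category.assoc]

/-- Under condition (b), the functor `𝒯(T,-)` is full onto `Γ`-linear maps. -/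
lemma homFull [CategoryTheory.Linear k 𝒯] [HasFiniteBiproducts 𝒯] [IsIdempotentComplete 𝒯]
    {d : ℕ} (hd : 1 ≤ d) (hfin : HomFinite k 𝒯) (SD : SerreData k 𝒯)
    (A : Angulation 𝒯 d) (T : 𝒯) (hb : CondB 𝒯 A T) : HomFunctorFull 𝒯 T := by
  obtain ⟨m, rfl⟩ : ∃ m, d = m + 1 := ⟨d - 1, (Nat.succ_pred_eq_of_pos hd).symm⟩
  suffices H : ∀ (n : ℕ) (X Y : 𝒯) (φ : (T ⟶ X) →ₗ[(End T)ᵐᵒᵖ] (T ⟶ Y)),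
      Module.finrank k (X ⟶ X) ≤ n → ∃ g : X ⟶ Y, ∀ a, φ a = a ≫ g by
    intro X Y φ
    exact H (Module.finrank k (X ⟶ X)) X Y φ le_rfl
  intro n
  induction n with
  | zero =>
    intro X Y φ hn
    by_cases h0 : ∀ a : T ⟶ X, a = 0
    · exact ⟨0, fun a => by rw [h0 a, map_zero, Limits.zero_comp]⟩
    · exfalso
      push_neg at h0
      obtain ⟨a₀, ha₀⟩ := h0
      have hone : (𝟙 X : X ⟶ X) ≠ 0 := by
        intro h1
        exact ha₀ (by rw [← Category.comp_id a₀, h1, Limits.comp_zero])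
      haveI := hfin X X
      have : 0 < Module.finrank k (X ⟶ X) :=
        Module.finrank_pos_iff.mpr ⟨⟨𝟙 X, 0, hone⟩⟩
      omega
  | succ n ih =>
    intro X Y φ hn
    by_cases h0 : ∀ a : T ⟶ X, a = 0
    · exact ⟨0, fun a => by rw [h0 a, map_zero, Limits.zero_comp]⟩
    push_neg at h0
    obtain ⟨a₀, ha₀⟩ := h0
    have hz : ¬ Limits.IsZero X := fun h => ha₀ (h.eq_of_tgt a₀ 0)
    by_cases hind : Indecomposable' 𝒯 X
    · -- indecomposable case: use condition (b)
      obtain ⟨C, hC, hadd, ⟨ψ⟩, hconn⟩ := hb X hind ⟨a₀, ha₀⟩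
      obtain ⟨g', hg'⟩ := angleLift SD A T C hC hadd hconn Y
        (φ.comp (postcompHom 𝒯 T ψ.hom))
      refine ⟨ψ.inv ≫ g', fun a => ?_⟩
      have h1 : φ ((a ≫ ψ.inv) ≫ ψ.hom) = (a ≫ ψ.inv) ≫ g' := hg' (a ≫ ψ.inv)
      rw [Category.assoc, ψ.inv_hom_id, Category.comp_id] at h1
      rw [h1, Category.assoc]
    · -- decomposable case: split an idempotent and use the inductive hypothesis
      have hB : ¬ ∀ e : X ⟶ X, e ≫ e = e → e = 0 ∨ e = 𝟙 X := fun h => hind ⟨hz, h⟩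
      push_neg at hB
      obtain ⟨q, hq, hq0, hq1⟩ := hB
      obtain ⟨X₁, i₁, p₁, hip₁, hpi₁⟩ := IsIdempotentComplete.idempotents_split X q hq
      have hcq : (𝟙 X - q) ≫ (𝟙 X - q) = 𝟙 X - q := by
        simp only [Preadditive.sub_comp, Preadditive.comp_sub, Category.id_comp,
          Category.comp_id, hq, sub_self, sub_zero]
      obtain ⟨X₂, i₂, p₂, hip₂, hpi₂⟩ := IsIdempotentComplete.idempotents_split X (𝟙 X - q) hcq
      have hi₁c : i₁ ≫ (𝟙 X - q) = 0 := by
        rw [Preadditive.comp_sub, Category.comp_id, ← hpi₁, ← Category.assoc, hip₁,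
          Category.id_comp, sub_self]
      have hi₂c : i₂ ≫ (𝟙 X - q) = i₂ := by
        rw [← hpi₂, ← Category.assoc, hip₂, Category.id_comp]
      have hi₂q : i₂ ≫ q = 0 := by
        have h2 := hi₂c
        rw [Preadditive.comp_sub, Category.comp_id] at h2
        exact sub_eq_self.mp h2
      have hi₁p₂ : i₁ ≫ p₂ = 0 := by
        have h1 : i₁ ≫ (p₂ ≫ i₂) ≫ p₂ = i₁ ≫ p₂ := by
          rw [Category.assoc, hip₂, Category.comp_id]
        rw [← h1, hpi₂, ← Category.assoc, hi₁c, Limits.zero_comp]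
      have hi₂p₁ : i₂ ≫ p₁ = 0 := by
        have h1 : i₂ ≫ (p₁ ≫ i₁) ≫ p₁ = i₂ ≫ p₁ := by
          rw [Category.assoc, hip₁, Category.comp_id]
        rw [← h1, hpi₁, ← Category.assoc, hi₂q, Limits.zero_comp]
      have hip₁' : ∀ {Z : 𝒯} (f : X₁ ⟶ Z), i₁ ≫ p₁ ≫ f = f := fun f => by
        rw [← Category.assoc, hip₁, Category.id_comp]
      have hip₂' : ∀ {Z : 𝒯} (f : X₂ ⟶ Z), i₂ ≫ p₂ ≫ f = f := fun f => by
        rw [← Category.assoc, hip₂, Category.id_comp]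
      have hi₁p₂' : ∀ {Z : 𝒯} (f : X₂ ⟶ Z), i₁ ≫ p₂ ≫ f = 0 := fun f => by
        rw [← Category.assoc, hi₁p₂, Limits.zero_comp]
      have hi₂p₁' : ∀ {Z : 𝒯} (f : X₁ ⟶ Z), i₂ ≫ p₁ ≫ f = 0 := fun f => by
        rw [← Category.assoc, hi₂p₁, Limits.zero_comp]
      -- the dimension count
      let Φ : ((X₁ ⟶ X₁) × (X₂ ⟶ X₂)) →ₗ[k] (X ⟶ X) :=
        { toFun := fun uv => p₁ ≫ uv.1 ≫ i₁ + p₂ ≫ uv.2 ≫ i₂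
          map_add' := fun uv vw => by
            simp only [Prod.fst_add, Prod.snd_add, Preadditive.comp_add, Preadditive.add_comp]
            abel
          map_smul' := fun c uv => by
            simp only [Prod.smul_fst, Prod.smul_snd, Linear.comp_smul, Linear.smul_comp,
              smul_add, RingHom.id_apply] }
      have key1 : ∀ ab : (X₁ ⟶ X₁) × (X₂ ⟶ X₂), i₁ ≫ Φ ab ≫ p₁ = ab.1 := by
        intro ab
        show i₁ ≫ (p₁ ≫ ab.1 ≫ i₁ + p₂ ≫ ab.2 ≫ i₂) ≫ p₁ = ab.1
        simp only [Preadditive.add_comp, Preadditive.comp_add, Category.assoc,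
          hip₁', hi₁p₂', add_zero, hip₁, Category.comp_id]
      have key2 : ∀ ab : (X₁ ⟶ X₁) × (X₂ ⟶ X₂), i₂ ≫ Φ ab ≫ p₂ = ab.2 := by
        intro ab
        show i₂ ≫ (p₁ ≫ ab.1 ≫ i₁ + p₂ ≫ ab.2 ≫ i₂) ≫ p₂ = ab.2
        simp only [Preadditive.add_comp, Preadditive.comp_add, Category.assoc,
          hip₂', hi₂p₁', zero_add, hip₂, Category.comp_id]
      have hΦ : Function.Injective Φ := by
        intro uv vw h
        have e1 : uv.1 = vw.1 := by rw [← key1 uv, ← key1 vw, h]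
        have e2 : uv.2 = vw.2 := by rw [← key2 uv, ← key2 vw, h]
        exact Prod.ext e1 e2
      haveI := hfin X X
      haveI := hfin X₁ X₁
      haveI := hfin X₂ X₂
      have hle := LinearMap.finrank_le_finrank_of_injective hΦ
      rw [Module.finrank_prod] at hle
      have hone₁ : (𝟙 X₁ : X₁ ⟶ X₁) ≠ 0 := by
        intro h1
        exact hq0 (by rw [← hpi₁, ← Category.id_comp i₁, h1, Limits.zero_comp,
          Limits.comp_zero])
      have hone₂ : (𝟙 X₂ : X₂ ⟶ X₂) ≠ 0 := by
        intro h1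
        have h2 : 𝟙 X - q = 0 := by
          rw [← hpi₂, ← Category.id_comp i₂, h1, Limits.zero_comp, Limits.comp_zero]
        exact hq1 (sub_eq_zero.mp h2).symm
      have hpos₁ : 0 < Module.finrank k (X₁ ⟶ X₁) :=
        Module.finrank_pos_iff.mpr ⟨⟨𝟙 X₁, 0, hone₁⟩⟩
      have hpos₂ : 0 < Module.finrank k (X₂ ⟶ X₂) :=
        Module.finrank_pos_iff.mpr ⟨⟨𝟙 X₂, 0, hone₂⟩⟩
      obtain ⟨g₁, hg₁⟩ := ih X₁ Y (φ.comp (postcompHom 𝒯 T i₁)) (by omega)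
      obtain ⟨g₂, hg₂⟩ := ih X₂ Y (φ.comp (postcompHom 𝒯 T i₂)) (by omega)
      have hg₁' : ∀ b : T ⟶ X₁, φ (b ≫ i₁) = b ≫ g₁ := fun b => hg₁ b
      have hg₂' : ∀ b : T ⟶ X₂, φ (b ≫ i₂) = b ≫ g₂ := fun b => hg₂ b
      refine ⟨p₁ ≫ g₁ + p₂ ≫ g₂, fun a => ?_⟩
      have hsplit : a = (a ≫ p₁) ≫ i₁ + (a ≫ p₂) ≫ i₂ := by
        rw [Category.assoc, Category.assoc, hpi₁, hpi₂, ← Preadditive.comp_add,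
          show q + (𝟙 X - q) = 𝟙 X by abel, Category.comp_id]
      calc φ a = φ ((a ≫ p₁) ≫ i₁) + φ ((a ≫ p₂) ≫ i₂) := by
            rw [← map_add, ← hsplit]
        _ = (a ≫ p₁) ≫ g₁ + (a ≫ p₂) ≫ g₂ := by rw [hg₁', hg₂']
        _ = a ≫ (p₁ ≫ g₁ + p₂ ≫ g₂) := by
            rw [Preadditive.comp_add, Category.assoc, Category.assoc]

end Auxiliary

/-- If `T` satisfies condition (b), the essential image `𝒟` of `𝒯(T,-)` is closed under
direct summands. -/
theorem ess_image_closed_under_summands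
    (k 𝒯 : Type) [Field k] [IsAlgClosed k] [Category.{0} 𝒯] [Preadditive 𝒯]
    [CategoryTheory.Linear k 𝒯] [HasFiniteBiproducts 𝒯] [IsIdempotentComplete 𝒯]
    (d : ℕ) (hd : 1 ≤ d) (hfin : HomFinite k 𝒯) (SD : SerreData k 𝒯)
    (A : Angulation 𝒯 d) (T : 𝒯) (hb : CondB 𝒯 A T)
    (M N : ModuleCat (End T)ᵐᵒᵖ) (hM : M ∈ EssIm 𝒯 T)
    (s : N ⟶ M) (r : M ⟶ N) (hsr : s ≫ r = 𝟙 N) :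
    N ∈ EssIm 𝒯 T := by
  obtain ⟨X, ⟨α⟩⟩ := hM
  have hfull := homFull hd hfin SD A T hb
  -- element-level identities for the splitting and the isomorphism
  have h1 : ∀ y : ↑M, α.inv (α.hom y) = y := fun y =>
    congrArg (fun φ : M ⟶ M => φ y) α.hom_inv_id
  have h2 : ∀ x : T ⟶ X, α.hom (α.inv x) = x := fun x =>
    congrArg (fun φ : homMod 𝒯 T X ⟶ homMod 𝒯 T X => φ x) α.inv_hom_id
  have hrs : ∀ y : ↑N, r (s y) = y := fun y =>
    congrArg (fun φ : N ⟶ N => φ y) hsr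
  -- the idempotent `Γ`-linear endomorphism of `𝒯(T,X)`
  let e : (T ⟶ X) →ₗ[(End T)ᵐᵒᵖ] (T ⟶ X) :=
    { toFun := fun x => α.hom (s (r (α.inv x)))
      map_add' := fun x y => by exact (α.hom.hom ∘ₗ s.hom ∘ₗ r.hom ∘ₗ α.inv.hom).map_add x y
      map_smul' := fun c x => by exact (α.hom.hom ∘ₗ s.hom ∘ₗ r.hom ∘ₗ α.inv.hom).map_smul c x }
  have hEapp : ∀ x : T ⟶ X, e x = α.hom (s (r (α.inv x))) := fun _ => rfl
  obtain ⟨w, hw⟩ := hfull X X e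
  -- lift the idempotent to an idempotent endomorphism of `X`
  haveI : FiniteDimensional k (End X) := hfin X X
  let π := postRing (𝒯 := 𝒯) T X
  have hπw : π w = e := LinearMap.ext fun a => (hw a).symm
  have he : π w * π w = π w := by
    rw [hπw]
    refine LinearMap.ext fun x => ?_
    show e (e x) = e x
    rw [hEapp, hEapp, h1, hrs]
  obtain ⟨f, hf, hπf⟩ := fittingLift (k := k) π w he
  have hff : f ≫ f = f := hf
  obtain ⟨Yo, i, p, hip, hpi⟩ := IsIdempotentComplete.idempotents_split X f hff
  have hπf' : ∀ x : T ⟶ X, x ≫ f = e x := fun x =>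
    congrArg (fun φ : Module.End (End T)ᵐᵒᵖ (T ⟶ X) => φ x) (hπf.trans hπw)
  -- identities for the splitting of f
  have hip' : ∀ {Z : 𝒯} (g : Yo ⟶ Z), i ≫ p ≫ g = g := fun g => by
    rw [← Category.assoc, hip, Category.id_comp]
  have hifp : i ≫ f ≫ p = 𝟙 Yo := by
    rw [← hpi]
    simp only [Category.assoc]
    rw [hip' (i ≫ p), hip]
  -- the isomorphism N ≅ 𝒯(T, Yo)
  let F : ↑N →ₗ[(End T)ᵐᵒᵖ] (T ⟶ Yo) :=
    { toFun := fun y => α.hom (s y) ≫ p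
      map_add' := fun x y => by
        show α.hom (s (x + y)) ≫ p = α.hom (s x) ≫ p + α.hom (s y) ≫ p
        rw [map_add, map_add]
        exact Preadditive.add_comp _ _ _ _ _ _
      map_smul' := fun c y => by
        simp only [map_smul, RingHom.id_apply]
        show (c.unop ≫ α.hom (s y)) ≫ p = c.unop ≫ (α.hom (s y) ≫ p)
        exact Category.assoc _ _ _ }
  let G : (T ⟶ Yo) →ₗ[(End T)ᵐᵒᵖ] ↑N :=
    { toFun := fun b => r (α.inv (b ≫ i))
      map_add' := fun x y => by
        simp only [Preadditive.add_comp, map_add]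
        exact (r.hom ∘ₗ α.inv.hom).map_add (x ≫ i) (y ≫ i)
      map_smul' := fun c b => by
        simp only [RingHom.id_apply]
        show r (α.inv ((c.unop ≫ b) ≫ i)) = c • r (α.inv (b ≫ i))
        rw [Category.assoc]
        show r (α.inv (c • (b ≫ i))) = c • r (α.inv (b ≫ i))
        exact (r.hom ∘ₗ α.inv.hom).map_smul c (b ≫ i) }
  refine ⟨Yo, ⟨⟨ModuleCat.ofHom F, ModuleCat.ofHom G, ?_, ?_⟩⟩⟩
  · refine ModuleCat.hom_ext (LinearMap.ext fun y => ?_)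
    show G (F y) = y
    show r (α.inv ((α.hom (s y) ≫ p) ≫ i)) = y
    erw [Category.assoc, hpi, hπf', hEapp, h1, hrs, h1, hrs]
  · refine ModuleCat.hom_ext (LinearMap.ext fun b => ?_)
    show F (G b) = b
    show α.hom (s (r (α.inv (b ≫ i)))) ≫ p = b
    erw [← hEapp, ← hπf', Category.assoc, Category.assoc, hifp, Category.comp_id]
end
end

section
/- Let 𝒯 be a k-linear Hom-finite (d+2)-angulated category with split idempotents and Serre functor, and T ∈ 𝒯 satisfying condition (b) (as in the Setup). Then the functor 𝒯(T,−) : 𝒯 → mod Γ is full. -/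
noncomputable section
open CategoryTheory CategoryTheory.Limits

variable (k : Type) [Field k]
variable (𝒯 : Type) [Category.{0} 𝒯] [Preadditive 𝒯]

/-!
A `Γ`-linear map out of `𝒯(T, M)` with `M ∈ add T` is induced by a morphism, since this holds
for `M = T` (Yoneda) and passes to finite sums and summands. For an indecomposable `X` with
`𝒯(T, X) ≠ 0`, condition (b) gives an angle `⋯ → T₁ → T₀ → X →ʰ Σᵈ T_d`; as `𝒯(T, h) = 0`,
every map `T → X` lifts to `T₀`, so a `Γ`-linear `φ` on `𝒯(T, X)` is induced on `𝒯(T, T₀)` by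
some `g₀ : T₀ → Y` vanishing on `T₁`. Serre duality turns the exactness of
`𝒯(W, T₁) → 𝒯(W, T₀) → 𝒯(W, X)` into the exactness of `𝒯(X, Y) → 𝒯(T₀, Y) → 𝒯(T₁, Y)`, so `g₀`
factors through `T₀ → X`. An arbitrary `X` is reduced to indecomposables by splitting
idempotents, by induction on `dim End X`.
-/

section

variable {𝒯}

def HomFunctorFullAt (T X : 𝒯) : Prop :=
  ∀ (Y : 𝒯) (φ : (T ⟶ X) →ₗ[(End T)ᵐᵒᵖ] (T ⟶ Y)), ∃ g : X ⟶ Y, ∀ a, φ a = a ≫ g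

lemma homFunctorFullAt_of_forall_eq_zero {T X : 𝒯} (h : ∀ a : T ⟶ X, a = 0) :
    HomFunctorFullAt T X :=
  fun _ φ => ⟨0, fun a => by rw [h a, map_zero, zero_comp]⟩

lemma homFunctorFullAt_self (T : 𝒯) : HomFunctorFullAt T T := fun _ φ => ⟨φ (𝟙 T), fun a => by
  have h : φ (a ≫ 𝟙 T) = a ≫ φ (𝟙 T) := φ.map_smul (MulOpposite.op a) (𝟙 T)
  rwa [Category.comp_id] at h⟩

lemma HomFunctorFullAt.of_sum_eq_id {ι : Type} [Fintype ι] {T X : 𝒯} {Z : ι → 𝒯}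
    (p : ∀ j, X ⟶ Z j) (q : ∀ j, Z j ⟶ X) (hpq : ∑ j, p j ≫ q j = 𝟙 X)
    (hZ : ∀ j, HomFunctorFullAt T (Z j)) : HomFunctorFullAt T X := by
  intro Y φ
  choose g hg using fun j => hZ j Y (φ.comp (postcompHom 𝒯 T (q j)))
  refine ⟨∑ j, p j ≫ g j, fun a => ?_⟩
  calc φ a = φ (a ≫ ∑ j, p j ≫ q j) := by rw [hpq, Category.comp_id]
    _ = ∑ j, φ ((a ≫ p j) ≫ q j) := by simp only [Preadditive.comp_sum, map_sum, Category.assoc]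
    _ = ∑ j, (a ≫ p j) ≫ g j := Finset.sum_congr rfl fun j _ => hg j (a ≫ p j)
    _ = a ≫ ∑ j, p j ≫ g j := by simp only [Preadditive.comp_sum, Category.assoc]

lemma HomFunctorFullAt.of_add_eq_id {T X X₁ X₂ : 𝒯} (i₁ : X₁ ⟶ X) (r₁ : X ⟶ X₁)
    (i₂ : X₂ ⟶ X) (r₂ : X ⟶ X₂) (h : r₁ ≫ i₁ + r₂ ≫ i₂ = 𝟙 X)
    (h₁ : HomFunctorFullAt T X₁) (h₂ : HomFunctorFullAt T X₂) : HomFunctorFullAt T X :=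
  of_sum_eq_id (Z := fun b => Bool.rec X₂ X₁ b)
    (fun b => Bool.rec (motive := fun b => X ⟶ Bool.rec X₂ X₁ b) r₂ r₁ b)
    (fun b => Bool.rec (motive := fun b => Bool.rec X₂ X₁ b ⟶ X) i₂ i₁ b)
    (by simpa using h) (fun b => Bool.rec h₂ h₁ b)

lemma HomFunctorFullAt.of_iso {T X X' : 𝒯} (e : X ≅ X') (h : HomFunctorFullAt T X) :
    HomFunctorFullAt T X' :=
  of_sum_eq_id (ι := Unit) (fun _ => e.inv) (fun _ => e.hom) (by simp) fun _ => h

variable [HasFiniteBiproducts 𝒯]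

lemma InAdd.homFunctorFullAt {T M : 𝒯} (hM : InAdd 𝒯 T M) : HomFunctorFullAt T M := by
  obtain ⟨n, s, r, hsr⟩ := hM
  refine .of_sum_eq_id (fun j => s ≫ biproduct.π _ j) (fun j => biproduct.ι (fun _ => T) j ≫ r)
    ?_ fun _ => homFunctorFullAt_self T
  calc ∑ j, (s ≫ biproduct.π _ j) ≫ biproduct.ι (fun _ => T) j ≫ r
      = s ≫ (∑ j, biproduct.π _ j ≫ biproduct.ι (fun _ => T) j) ≫ r := by
        simp only [Preadditive.comp_sum, Preadditive.sum_comp, Category.assoc]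
    _ = 𝟙 M := by rw [biproduct.total, Category.id_comp, hsr]

lemma InAdd.eq_zero_of_comp_eq_zero {T M Z : 𝒯} (hM : InAdd 𝒯 T M) {f : M ⟶ Z}
    (h : ∀ a : T ⟶ M, a ≫ f = 0) : f = 0 := by
  obtain ⟨n, s, r, hsr⟩ := hM
  have hr : r ≫ f = 0 := biproduct.hom_ext' _ _ fun j => by
    simpa using h (biproduct.ι (fun _ => T) j ≫ r)
  rw [← Category.id_comp f, ← hsr, Category.assoc, hr, comp_zero]

end

section Linear

variable {k 𝒯} [Linear k 𝒯]

lemma SerreData.exists_comp_eq_of_exact (SD : SerreData k 𝒯) {A B C Y : 𝒯} {f : A ⟶ B}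
    {g : B ⟶ C}
    (hex : ∀ W : 𝒯, Function.Exact (fun a : W ⟶ A => a ≫ f) (fun a : W ⟶ B => a ≫ g))
    {g₀ : B ⟶ Y} (hg₀ : f ≫ g₀ = 0) : ∃ h : C ⟶ Y, g ≫ h = g₀ := by
  have := SD.equiv
  let W := SD.S.objPreimage Y
  let e : SD.S.obj W ≅ Y := SD.S.objObjPreimageIso Y
  have hann :
      SD.ε W B (g₀ ≫ e.inv) ∈ (LinearMap.ker (Linear.rightComp k W g)).dualAnnihilator := by
    refine (Submodule.mem_dualAnnihilator _).2 fun x hx => ?_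
    obtain ⟨b, rfl⟩ := (hex W x).mp hx
    rw [← SD.nat_left, reassoc_of% hg₀, zero_comp, map_zero, LinearMap.zero_apply]
  rw [← LinearMap.range_dualMap_eq_dualAnnihilator_ker] at hann
  obtain ⟨β, hβ⟩ := hann
  have hfac : g ≫ (SD.ε W C).symm β = g₀ ≫ e.inv :=
    (SD.ε W B).injective <| LinearMap.ext fun x => by
      rw [SD.nat_left, LinearEquiv.apply_symm_apply, ← hβ]
      rfl
  exact ⟨(SD.ε W C).symm β ≫ e.hom, by rw [reassoc_of% hfac, Iso.inv_hom_id, Category.comp_id]⟩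

lemma finrank_end_lt_of_retract {X Z : 𝒯} [FiniteDimensional k (X ⟶ X)] (i : Z ⟶ X)
    (r : X ⟶ Z) (hir : i ≫ r = 𝟙 Z) (hri : r ≫ i ≠ 𝟙 X) :
    Module.finrank k (Z ⟶ Z) < Module.finrank k (X ⟶ X) := by
  let Φ : (Z ⟶ Z) →ₗ[k] (X ⟶ X) := (Linear.leftComp k X r).comp (Linear.rightComp k Z i)
  have hΦ : Function.LeftInverse (fun u => i ≫ u ≫ r) Φ := fun f => by
    simp [Φ, reassoc_of% hir, hir]
  have hΦ_ne_top : LinearMap.range Φ ≠ ⊤ := fun htop => by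
    obtain ⟨f, hf⟩ := htop ▸ Submodule.mem_top (x := 𝟙 X)
    apply hri
    calc r ≫ i = (r ≫ i) ≫ Φ f := by rw [hf, Category.comp_id]
      _ = Φ f := by simp [Φ, reassoc_of% hir]
      _ = 𝟙 X := hf
  rw [← LinearMap.finrank_range_of_inj hΦ.injective]
  exact Submodule.finrank_lt hΦ_ne_top

lemma HomFinite.induction_indecomposable [IsIdempotentComplete 𝒯] (hfin : HomFinite k 𝒯)
    {P : 𝒯 → Prop} (zero : ∀ X, IsZero X → P X) (indec : ∀ X, Indecomposable' 𝒯 X → P X)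
    (split : ∀ {X X₁ X₂ : 𝒯} (i₁ : X₁ ⟶ X) (r₁ : X ⟶ X₁) (i₂ : X₂ ⟶ X) (r₂ : X ⟶ X₂),
      i₁ ≫ r₁ = 𝟙 X₁ → i₂ ≫ r₂ = 𝟙 X₂ → r₁ ≫ i₁ + r₂ ≫ i₂ = 𝟙 X → P X₁ → P X₂ → P X)
    (X : 𝒯) : P X := by
  induction hn : Module.finrank k (X ⟶ X) using Nat.strong_induction_on generalizing X with
  | _ n ih =>
  by_cases hX : IsZero X
  · exact zero X hX
  by_cases hind : Indecomposable' 𝒯 X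
  · exact indec X hind
  obtain ⟨e, hee, he0, he1⟩ : ∃ e : X ⟶ X, e ≫ e = e ∧ e ≠ 0 ∧ e ≠ 𝟙 X := by
    simpa [Indecomposable', hX] using hind
  obtain ⟨X₁, i₁, r₁, h₁, hr₁⟩ := IsIdempotentComplete.idempotents_split X e hee
  obtain ⟨X₂, i₂, r₂, h₂, hr₂⟩ :=
    IsIdempotentComplete.idempotents_split X (𝟙 X - e) (by simp [hee])
  have := hfin X X
  refine split i₁ r₁ i₂ r₂ h₁ h₂ (by rw [hr₁, hr₂, add_sub_cancel]) (ih _ ?_ X₁ rfl)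
    (ih _ ?_ X₂ rfl)
  · exact hn ▸ finrank_end_lt_of_retract i₁ r₁ h₁ (hr₁ ▸ he1)
  · exact hn ▸ finrank_end_lt_of_retract i₂ r₂ h₂ (by rwa [hr₂, Ne, sub_eq_self])

lemma Angulation.homFunctorFullAt_of_isAngle [HasFiniteBiproducts 𝒯] {m : ℕ}
    (A : Angulation 𝒯 (m + 1)) (SD : SerreData k 𝒯) {T : 𝒯}
    {C : Candidate 𝒯 A.shift (m + 1)} (hC : A.IsAngle C) (hm : InAdd 𝒯 T (C.obj m))
    (hm' : InAdd 𝒯 T (C.obj (m + 1))) (hconn : ∀ a : T ⟶ C.obj (m + 1 + 1), a ≫ C.conn = 0) :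
    HomFunctorFullAt T (C.obj (m + 1 + 1)) := by
  intro Y φ
  obtain ⟨g₀, hg₀⟩ := hm'.homFunctorFullAt Y (φ.comp (postcompHom 𝒯 T (C.hom (m + 1))))
  have hg₀_zero : C.hom m ≫ g₀ = 0 := hm.eq_zero_of_comp_eq_zero fun a => by
    rw [← Category.assoc, ← hg₀]
    simp [postcompHom, A.comp_zero C hC m le_rfl]
  obtain ⟨h, hh⟩ := SD.exists_comp_eq_of_exact (fun W => A.hom_exact C hC W m le_rfl) hg₀_zero
  refine ⟨h, fun a => ?_⟩
  obtain ⟨b, rfl⟩ := (A.hom_exact_last C hC T a).mp (hconn a)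
  rw [Category.assoc, hh]
  exact hg₀ b

end Linear

theorem homFunctor_full_of_condB_general
    (k 𝒯 : Type) [Field k] [Category.{0} 𝒯] [Preadditive 𝒯]
    [CategoryTheory.Linear k 𝒯] [HasFiniteBiproducts 𝒯] [IsIdempotentComplete 𝒯]
    (d : ℕ) (hd : 1 ≤ d) (hfin : HomFinite k 𝒯) (SD : SerreData k 𝒯)
    (A : Angulation 𝒯 d) (T : 𝒯) (hb : CondB 𝒯 A T) :
    HomFunctorFull 𝒯 T := by
  obtain ⟨m, rfl⟩ : ∃ m, d = m + 1 := ⟨d - 1, by omega⟩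
  intro X
  refine hfin.induction_indecomposable (P := HomFunctorFullAt T)
    (fun X hX => homFunctorFullAt_of_forall_eq_zero fun a => hX.eq_of_tgt a 0)
    (fun X hX => ?_) (fun i₁ r₁ i₂ r₂ _ _ h => .of_add_eq_id i₁ r₁ i₂ r₂ h) X
  by_cases hT : ∃ a : T ⟶ X, a ≠ 0
  · obtain ⟨C, hC, hadd, ⟨e⟩, hconn⟩ := hb X hX hT
    exact (A.homFunctorFullAt_of_isAngle SD hC (hadd m (by omega)) (hadd (m + 1) le_rfl)
      hconn).of_iso e
  · push Not at hT
    exact homFunctorFullAt_of_forall_eq_zero hT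

/-- If `T` satisfies condition (b), then `𝒯(T,-) : 𝒯 → mod Γ` is a full functor. -/
theorem homFunctor_full_of_condB
    (k 𝒯 : Type) [Field k] [IsAlgClosed k] [Category.{0} 𝒯] [Preadditive 𝒯]
    [CategoryTheory.Linear k 𝒯] [HasFiniteBiproducts 𝒯] [IsIdempotentComplete 𝒯]
    (d : ℕ) (hd : 1 ≤ d) (hfin : HomFinite k 𝒯) (SD : SerreData k 𝒯)
    (A : Angulation 𝒯 d) (T : 𝒯) (hb : CondB 𝒯 A T) :
    HomFunctorFull 𝒯 T :=
  homFunctor_full_of_condB_general k 𝒯 d hd hfin SD A T hb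
end
end

section
/- Let T be an Oppermann–Thomas cluster tilting object in a (d+2)-angulated category 𝒯 as in the Setup. Then 𝒯(T,−) induces an equivalence of categories 𝒯 / [add Σ^d T] ≃ 𝒟, where [add Σ^d T] is the ideal of morphisms factoring through an object of add Σ^d T and 𝒟 is the essential image of 𝒯(T,−). In particular, for a morphism g : X → Y in 𝒯, one has 𝒯(T,g) = 0 if and only if g factors through an object of add Σ^d T. -/
noncomputable section
open CategoryTheory CategoryTheory.Limits

variable (k : Type) [Field k]
variable (𝒯 : Type) [Category.{0} 𝒯] [Preadditive 𝒯]

/-- `T` is cluster tilting in the sense of Oppermann–Thomas. -/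
def OTClusterTilting (𝒯 : Type) [Category.{0} 𝒯] [Preadditive 𝒯] [HasFiniteBiproducts 𝒯]
    {d : ℕ} (A : Angulation 𝒯 d) (T : 𝒯) : Prop :=
  (∀ a : T ⟶ A.shift.obj T, a = 0) ∧
  ∀ X : 𝒯, ∃ C, A.IsAngle C ∧ (∀ i, i ≤ d → InAdd 𝒯 T (C.obj i)) ∧
    Nonempty (C.obj (d + 1) ≅ X)

/-!
Resolve `X` by an angle `T₀ → ⋯ → T_d → X → Σᵈ T₀` with all `Tᵢ ∈ add T`. As
`𝒯(T, Σᵈ T) = 0`, every map `T ⟶ X` lifts to `T_d`, and on `add T` the functor `𝒯(T, -)` is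
full. Serre duality turns the exactness of `𝒯(W, -)` along the angle into exactness of
`𝒯(-, Y)`: a map `T_d ⟶ Y` vanishing on `T_{d-1}` extends over `X` (fullness), and a map
`X ⟶ Y` vanishing on `T_d` factors through `X ⟶ Σᵈ T₀` (the kernel of `𝒯(T, -)`).
-/

section

variable {𝒯 : Type} [Category.{0} 𝒯] [Preadditive 𝒯]

namespace SerreData

variable {k : Type} [Field k] [CategoryTheory.Linear k 𝒯]

lemma exists_comp_eq_of_exact_s16 (SD : SerreData k 𝒯) {W M₀ M₁ M₂ : 𝒯}
    {p : M₀ ⟶ M₁} {q : M₁ ⟶ M₂}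
    (hex : Function.Exact (fun a : W ⟶ M₀ => a ≫ p) (fun a : W ⟶ M₁ => a ≫ q))
    {w : M₁ ⟶ SD.S.obj W} (hw : p ≫ w = 0) : ∃ g : M₂ ⟶ SD.S.obj W, q ≫ g = w := by
  have hker : SD.ε W M₁ w ∈ (LinearMap.ker (Linear.rightComp k W q)).dualAnnihilator := by
    refine (Submodule.mem_dualAnnihilator _).2 fun a ha => ?_
    obtain ⟨b, rfl⟩ := (hex a).1 ha
    simpa [hw] using (SD.nat_left p w b).symm
  rw [← LinearMap.range_dualMap_eq_dualAnnihilator_ker] at hker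
  obtain ⟨ξ, hξ⟩ := hker
  refine ⟨(SD.ε W M₂).symm ξ, (SD.ε W M₁).injective (LinearMap.ext fun a => ?_)⟩
  rw [SD.nat_left, LinearEquiv.apply_symm_apply, ← hξ]
  rfl

lemma exists_comp_eq_of_forall_exact (SD : SerreData k 𝒯) {M₀ M₁ M₂ Y : 𝒯}
    {p : M₀ ⟶ M₁} {q : M₁ ⟶ M₂}
    (hex : ∀ W : 𝒯, Function.Exact (fun a : W ⟶ M₀ => a ≫ p) (fun a : W ⟶ M₁ => a ≫ q))
    (w : M₁ ⟶ Y) (hw : p ≫ w = 0) : ∃ g : M₂ ⟶ Y, q ≫ g = w := by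
  have := SD.equiv
  let e := SD.S.objObjPreimageIso Y
  obtain ⟨g, hg⟩ :=
    SD.exists_comp_eq_of_exact_s16 (hex _) (w := w ≫ e.inv) (by simp [reassoc_of% hw])
  exact ⟨g ≫ e.hom, by simp [reassoc_of% hg]⟩

end SerreData

variable [HasFiniteBiproducts 𝒯]

namespace InAdd

variable {T M N : 𝒯}

lemma eq_zero_of_forall_comp_eq_zero (h : InAdd 𝒯 T M) {c : M ⟶ N}
    (hc : ∀ a : T ⟶ M, a ≫ c = 0) : c = 0 := by
  obtain ⟨n, s, r, hsr⟩ := h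
  have hr : r ≫ c = 0 := biproduct.hom_ext' _ _ fun j => by
    simpa using hc (biproduct.ι (fun _ : Fin n => T) j ≫ r)
  rw [← Category.id_comp c, ← hsr, Category.assoc, hr, comp_zero]

lemma eq_zero_of_forall_eq_zero {S : 𝒯} (h : InAdd 𝒯 S M) (hS : ∀ a : T ⟶ S, a = 0)
    (a : T ⟶ M) : a = 0 := by
  obtain ⟨n, s, r, hsr⟩ := h
  have hs : a ≫ s = 0 := biproduct.hom_ext _ _ fun j => by
    simpa using hS (a ≫ s ≫ biproduct.π _ j)
  rw [← Category.comp_id a, ← hsr, ← Category.assoc, hs, zero_comp]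

lemma exists_comp_eq (h : InAdd 𝒯 T M) (φ : (T ⟶ M) →ₗ[(End T)ᵐᵒᵖ] (T ⟶ N)) :
    ∃ g : M ⟶ N, ∀ a : T ⟶ M, φ a = a ≫ g := by
  obtain ⟨n, s, r, hsr⟩ := h
  let ι := biproduct.ι (fun _ : Fin n => T)
  let π := biproduct.π (fun _ : Fin n => T)
  refine ⟨s ≫ biproduct.desc fun i => φ (ι i ≫ r), fun a => ?_⟩
  have hφ : ∀ (e : T ⟶ T) (x : T ⟶ M), φ (e ≫ x) = e ≫ φ x := fun e x =>
    φ.map_smul (MulOpposite.op e) x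
  have hlift : a ≫ s = biproduct.lift fun i => a ≫ s ≫ π i := by
    ext; simp [π]
  calc φ a = φ ((a ≫ s) ≫ r) := by rw [Category.assoc, hsr, Category.comp_id]
    _ = ∑ i, φ ((a ≫ s ≫ π i) ≫ ι i ≫ r) := by
      rw [← Category.comp_id (a ≫ s), ← biproduct.total, Preadditive.comp_sum,
        Preadditive.sum_comp, map_sum]
      simp only [Category.assoc, π, ι]
    _ = a ≫ s ≫ biproduct.desc fun i => φ (ι i ≫ r) := by
      rw [← Category.assoc, hlift, biproduct.lift_desc]
      simp only [hφ]

lemma map (F : 𝒯 ⥤ 𝒯) [F.Additive] (h : InAdd 𝒯 T M) : InAdd 𝒯 (F.obj T) (F.obj M) := by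
  obtain ⟨n, s, r, hsr⟩ := h
  exact ⟨n, F.map s ≫ (F.mapBiproduct _).hom, (F.mapBiproduct _).inv ≫ F.map r,
    by rw [Category.assoc, Iso.hom_inv_id_assoc, ← F.map_comp, hsr, F.map_id]⟩

end InAdd

namespace Angulation

variable {d : ℕ} (A : Angulation 𝒯 d)

instance shift_additive : A.shift.Additive :=
  haveI := A.equiv
  Functor.additive_of_preserves_binary_products A.shift

lemma exists_lift_of_inAdd {T : 𝒯} (hT : ∀ a : T ⟶ A.shift.obj T, a = 0)
    {C : Candidate 𝒯 A.shift d} (hC : A.IsAngle C) (h₀ : InAdd 𝒯 T (C.obj 0))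
    (a : T ⟶ C.obj (d + 1)) : ∃ b : T ⟶ C.obj d, b ≫ C.hom d = a :=
  (A.hom_exact_last C hC T a).1 ((h₀.map A.shift).eq_zero_of_forall_eq_zero hT _)

end Angulation

namespace OTClusterTilting

variable {k : Type} [Field k] [CategoryTheory.Linear k 𝒯] {T : 𝒯}

theorem homFunctorFull (SD : SerreData k 𝒯) {d : ℕ} {A : Angulation 𝒯 (d + 1)}
    (hT : OTClusterTilting 𝒯 A T) : HomFunctorFull 𝒯 T := by
  intro X Y φ
  obtain ⟨C, hC, hadd, ⟨e⟩⟩ := hT.2 X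
  obtain ⟨g₁, hg₁⟩ := (hadd (d + 1) le_rfl).exists_comp_eq
    (φ.comp (postcompHom 𝒯 T (C.hom (d + 1) ≫ e.hom)))
  have hg₁_zero : C.hom d ≫ g₁ = 0 :=
    (hadd d (by omega)).eq_zero_of_forall_comp_eq_zero fun a => by
      rw [← Category.assoc, ← hg₁]
      change φ ((a ≫ C.hom d) ≫ C.hom (d + 1) ≫ e.hom) = 0
      rw [Category.assoc, reassoc_of% (A.comp_zero C hC d le_rfl), zero_comp, comp_zero,
        map_zero]
  obtain ⟨g₂, hg₂⟩ :=
    SD.exists_comp_eq_of_forall_exact (fun W => A.hom_exact C hC W d le_rfl) g₁ hg₁_zero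
  refine ⟨e.inv ≫ g₂, fun a => ?_⟩
  obtain ⟨b, hb⟩ := A.exists_lift_of_inAdd hT.1 hC (hadd 0 (by omega)) (a ≫ e.inv)
  have ha : a = b ≫ C.hom (d + 1) ≫ e.hom := by simp [reassoc_of% hb]
  calc φ a = b ≫ g₁ := by rw [ha]; exact hg₁ b
    _ = a ≫ e.inv ≫ g₂ := by rw [← hg₂, reassoc_of% hb]

theorem exists_inAdd_shift_factorization (SD : SerreData k 𝒯) {d : ℕ} {A : Angulation 𝒯 d}
    (hT : OTClusterTilting 𝒯 A T) {X Y : 𝒯} {g : X ⟶ Y} (hg : ∀ a : T ⟶ X, a ≫ g = 0) :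
    ∃ Z : 𝒯, InAdd 𝒯 (A.shift.obj T) Z ∧ ∃ (u : X ⟶ Z) (v : Z ⟶ Y), g = u ≫ v := by
  obtain ⟨C, hC, hadd, ⟨e⟩⟩ := hT.2 X
  have hw : C.hom d ≫ e.hom ≫ g = 0 :=
    (hadd d le_rfl).eq_zero_of_forall_comp_eq_zero fun a => by
      simpa using hg (a ≫ C.hom d ≫ e.hom)
  obtain ⟨v, hv⟩ := SD.exists_comp_eq_of_forall_exact (A.hom_exact_last C hC) _ hw
  exact ⟨_, (hadd 0 (Nat.zero_le _)).map A.shift, e.inv ≫ C.conn, v, by simp [hv]⟩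

end OTClusterTilting

end

theorem quotient_equivalence_of_OT_cluster_tilting_general
    (k 𝒯 : Type) [Field k] [Category.{0} 𝒯] [Preadditive 𝒯]
    [CategoryTheory.Linear k 𝒯] [HasFiniteBiproducts 𝒯]
    (d : ℕ) (hd : 1 ≤ d) (SD : SerreData k 𝒯)
    (A : Angulation 𝒯 d) (T : 𝒯) (hT : OTClusterTilting 𝒯 A T) :
    HomFunctorFull 𝒯 T ∧
    ∀ (X Y : 𝒯) (g : X ⟶ Y),
      (∀ a : T ⟶ X, a ≫ g = 0) ↔
        ∃ Z : 𝒯, InAdd 𝒯 (A.shift.obj T) Z ∧ ∃ (u : X ⟶ Z) (v : Z ⟶ Y), g = u ≫ v := by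
  obtain ⟨d, rfl⟩ : ∃ m, d = m + 1 := ⟨d - 1, by omega⟩
  refine ⟨hT.homFunctorFull SD, fun X Y g => ⟨hT.exists_inAdd_shift_factorization SD, ?_⟩⟩
  rintro ⟨Z, hZ, u, v, rfl⟩ a
  rw [← Category.assoc, hZ.eq_zero_of_forall_eq_zero hT.1 (a ≫ u), zero_comp]

/-- If `T` is Oppermann–Thomas cluster tilting, then `𝒯(T,-)` induces an equivalence
`𝒯/[add Σᵈ T] ≃ 𝒟`: the functor is full, and a morphism `g` is killed by `𝒯(T,-)` iff it
factors through an object of `add Σᵈ T`. -/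
theorem quotient_equivalence_of_OT_cluster_tilting
    (k 𝒯 : Type) [Field k] [IsAlgClosed k] [Category.{0} 𝒯] [Preadditive 𝒯]
    [CategoryTheory.Linear k 𝒯] [HasFiniteBiproducts 𝒯] [IsIdempotentComplete 𝒯]
    (d : ℕ) (hd : 1 ≤ d) (hfin : HomFinite k 𝒯) (SD : SerreData k 𝒯)
    (A : Angulation 𝒯 d) (T : 𝒯) (hT : OTClusterTilting 𝒯 A T) :
    HomFunctorFull 𝒯 T ∧
    ∀ (X Y : 𝒯) (g : X ⟶ Y),
      (∀ a : T ⟶ X, a ≫ g = 0) ↔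
        ∃ Z : 𝒯, InAdd 𝒯 (A.shift.obj T) Z ∧ ∃ (u : X ⟶ Z) (v : Z ⟶ Y), g = u ≫ v :=
  quotient_equivalence_of_OT_cluster_tilting_general k 𝒯 d hd SD A T hT
end
end

section
/- Let 𝒯 be a k-linear Hom-finite (d+2)-angulated category with split idempotents and Serre functor, T ∈ 𝒯 with Γ = End_𝒯(T), X ∈ 𝒯 indecomposable with 𝒯(T,X) ≠ 0, and T_d → ⋯ → T₀ → X →^h Σ^d T_d a (d+2)-angle with T_i ∈ add T and 𝒯(T,h) = 0. Then h lies in the radical of 𝒯, and applying 𝒯(T,−) to the first d+2 terms yields an exact complex 𝒯(T,T_d) → ⋯ → 𝒯(T,T₀) → 𝒯(T,X) → 0 consisting of projective Γ-modules followed by 𝒯(T,X), i.e. the start of a projective resolution of 𝒯(T,X). -/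
noncomputable section
open CategoryTheory CategoryTheory.Limits

variable (k : Type) [Field k]
variable (𝒯 : Type) [Category.{0} 𝒯] [Preadditive 𝒯]

section Aux

open Polynomial

/-- If a product of two polynomial evaluations is `1`, the first factor is a unit. -/
lemma isUnit_aeval_of_mul_eq_one {k A : Type} [Field k] [Ring A] [Algebra k A]
    (e : A) (a b : k[X]) (h : Polynomial.aeval e (a * b) = 1) :
    IsUnit (Polynomial.aeval e a) := by
  refine isUnit_iff_exists.mpr ⟨Polynomial.aeval e b, ?_, ?_⟩
  · rw [← map_mul]; exact h
  · rw [← map_mul, mul_comm]; exact h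

/-- If `p(e) = 0` and `p(c) ≠ 0` then `e - c` is a unit. -/
lemma isUnit_sub_algebraMap_of_eval_ne_zero {k A : Type} [Field k] [Ring A] [Algebra k A]
    (e : A) (p : k[X]) (hp : Polynomial.aeval e p = 0) (c : k) (hc : p.eval c ≠ 0) :
    IsUnit (e - algebraMap k A c) := by
  have h1 : e - algebraMap k A c = Polynomial.aeval e (X - C c) := by simp
  rw [h1]
  apply isUnit_aeval_of_mul_eq_one e (X - C c) (Polynomial.C (p.eval c)⁻¹ * -(p /ₘ (X - C c)))
  have hps : (X - C c) * (p /ₘ (X - C c)) = p - C (p.eval c) := by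
    have h2 := modByMonic_add_div p (X - C c)
    rw [modByMonic_X_sub_C_eq_C_eval] at h2
    linear_combination h2
  have h3 : (X - C c) * (Polynomial.C (p.eval c)⁻¹ * -(p /ₘ (X - C c)))
      = Polynomial.C (p.eval c)⁻¹ * -(p - C (p.eval c)) := by
    rw [← hps]; ring
  rw [h3, map_mul, map_neg, map_sub, hp, zero_sub, neg_neg, aeval_C, aeval_C, ← map_mul,
    inv_mul_cancel₀ hc, map_one]

/-- In an algebra whose only idempotents are `0` and `1`, every integral element
`e` satisfies: `e` is a unit or `1 - e` is a unit. -/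
lemma isUnit_or_isUnit_one_sub {k A : Type} [Field k] [Ring A] [Algebra k A]
    (e : A) (hInt : IsIntegral k e)
    (hidem : ∀ f : A, f * f = f → f = 0 ∨ f = 1) :
    IsUnit e ∨ IsUnit (1 - e) := by
  set p := minpoly k e with hpdef
  have hpe : Polynomial.aeval e p = 0 := minpoly.aeval k e
  have hp0 : p ≠ 0 := minpoly.ne_zero hInt
  by_cases h0 : p.eval 0 ≠ 0
  · left
    have := isUnit_sub_algebraMap_of_eval_ne_zero e p hpe 0 h0
    simpa using this
  by_cases h1 : p.eval 1 ≠ 0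
  · right
    have := (isUnit_sub_algebraMap_of_eval_ne_zero e p hpe 1 h1).neg
    simpa [neg_sub] using this
  push_neg at h0 h1
  set a := p.rootMultiplicity 0 with ha
  set q := p /ₘ (X - C (0 : k)) ^ a with hq
  have hfact : (X - C (0 : k)) ^ a * q = p := p.pow_mul_divByMonic_rootMultiplicity_eq 0
  have hXa : (X : k[X]) - C (0 : k) = X := by rw [map_zero, sub_zero]
  rw [hXa] at hfact
  have hq0 : q.eval 0 ≠ 0 := eval_divByMonic_pow_rootMultiplicity_ne_zero (0 : k) hp0
  have hapos : 1 ≤ a := (rootMultiplicity_pos hp0).2 h0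
  have hXq : ¬ (X : k[X]) ∣ q := by
    rw [X_dvd_iff, coeff_zero_eq_eval_zero]; exact hq0
  have hcop : IsCoprime ((X : k[X]) ^ a) q :=
    ((Polynomial.prime_X.coprime_iff_not_dvd).2 hXq).pow_left
  obtain ⟨u, v, huv⟩ := hcop
  have hq1 : (X - C (1 : k)) ∣ q := by
    rw [dvd_iff_isRoot]
    have h4 := congrArg (Polynomial.eval 1) hfact
    simpa [h1] using h4
  obtain ⟨w, hw⟩ := hq1
  have hsum : Polynomial.aeval e (u * X ^ a) + Polynomial.aeval e (v * q) = 1 := by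
    rw [← map_add, huv, map_one]
  have hprod : Polynomial.aeval e (v * q) * Polynomial.aeval e (u * X ^ a) = 0 := by
    rw [← map_mul]
    have h5 : v * q * (u * X ^ a) = v * u * p := by rw [← hfact]; ring
    rw [h5, map_mul, hpe, mul_zero]
  set f := Polynomial.aeval e (v * q) with hf
  have hff : f * f = f := by
    have h6 : f * (Polynomial.aeval e (u * X ^ a) + f) = f := by rw [hsum, mul_one]
    rw [mul_add, hprod, zero_add] at h6
    exact h6
  rcases hidem f hff with hf0 | hf1
  · left
    have h1u : Polynomial.aeval e (u * X ^ a) = 1 := by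
      rw [← hsum, hf0, add_zero]
    have he : e = Polynomial.aeval e X := (Polynomial.aeval_X (R := k) e).symm
    rw [he]
    apply isUnit_aeval_of_mul_eq_one e X (u * X ^ (a - 1))
    have h7 : (X : k[X]) * (u * X ^ (a - 1)) = u * X ^ a := by
      conv_rhs => rw [show a = (a - 1) + 1 from (Nat.succ_pred_eq_of_pos hapos).symm]
      ring
    rw [h7]; exact h1u
  · right
    have hu : IsUnit (Polynomial.aeval e (X - C (1 : k))) := by
      apply isUnit_aeval_of_mul_eq_one e (X - C (1 : k)) (w * v)
      have h8 : (X - C (1 : k)) * (w * v) = v * q := by rw [hw]; ring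
      rw [h8]; exact hf1
    have h9 : Polynomial.aeval e (X - C (1 : k)) = e - 1 := by simp
    rw [h9] at hu
    simpa [neg_sub] using hu.neg

/-- `𝒯(T, -)` takes objects of `add T` to projective `Γ`-modules. -/
lemma projective_hom_of_inAdd (𝒯 : Type) [Category.{0} 𝒯] [Preadditive 𝒯]
    [HasFiniteBiproducts 𝒯] (T X : 𝒯) (h : InAdd 𝒯 T X) :
    Module.Projective (End T)ᵐᵒᵖ (T ⟶ X) := by
  obtain ⟨n, s, r, hsr⟩ := h
  haveI : Module.Projective (End T)ᵐᵒᵖ (T ⟶ biproduct (fun _ : Fin n => T)) := by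
    refine Module.Projective.of_equiv'
      (M := Fin n → (End T)ᵐᵒᵖ) (LinearEquiv.symm ?_)
    exact
      { toFun := fun a i => MulOpposite.op (a ≫ biproduct.π (fun _ : Fin n => T) i)
        invFun := fun b => biproduct.lift (fun i => (b i).unop)
        map_add' := by
          intro x y
          funext i
          show MulOpposite.op ((x + y) ≫ _) = _
          rw [Preadditive.add_comp]
          rfl
        map_smul' := by
          intro m x
          funext i
          show MulOpposite.op ((m.unop ≫ x) ≫ _) = m * (MulOpposite.op (x ≫ _) : (End T)ᵐᵒᵖ)
          rw [Category.assoc]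
          rfl
        left_inv := by
          intro x
          apply biproduct.hom_ext
          intro j
          simp
        right_inv := by
          intro b
          funext i
          simp }
  refine Module.Projective.of_split (postcompHom 𝒯 T s) (postcompHom 𝒯 T r) ?_
  apply LinearMap.ext
  intro x
  show (x ≫ s) ≫ r = x
  rw [Category.assoc, hsr, Category.comp_id]

end Aux

/-- Let `X = C.obj (d+1)` be indecomposable with `𝒯(T,X) ≠ 0`, and let
`T_d → ⋯ → T₀ → X →ʰ Σᵈ T_d` be a `(d+2)`-angle with `T_i ∈ add T` and `𝒯(T,h) = 0`.
Then `h` is in the radical of `𝒯`, and applying `𝒯(T,-)` yields an exact sequence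
`𝒯(T,T_d) → ⋯ → 𝒯(T,T₀) → 𝒯(T,X) → 0` of which the first `d+1` terms are projective
`Γ`-modules: the start of a projective resolution of `𝒯(T,X)`. -/
theorem angle_gives_projective_resolution
    (k 𝒯 : Type) [Field k] [IsAlgClosed k] [Category.{0} 𝒯] [Preadditive 𝒯]
    [CategoryTheory.Linear k 𝒯] [HasFiniteBiproducts 𝒯] [IsIdempotentComplete 𝒯]
    (d : ℕ) (hd : 1 ≤ d) (hfin : HomFinite k 𝒯) (SD : SerreData k 𝒯)
    (A : Angulation 𝒯 d) (T : 𝒯)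
    (C : Candidate 𝒯 A.shift d) (hC : A.IsAngle C)
    (hind : Indecomposable' 𝒯 (C.obj (d + 1)))
    (hnz : ∃ a : T ⟶ C.obj (d + 1), a ≠ 0)
    (hadd : ∀ i, i ≤ d → InAdd 𝒯 T (C.obj i))
    (hkill : ∀ a : T ⟶ C.obj (d + 1), a ≫ C.conn = 0) :
    (∀ g : A.shift.obj (C.obj 0) ⟶ C.obj (d + 1),
      IsIso (𝟙 (C.obj (d + 1)) - C.conn ≫ g)) ∧
    (∀ i, i ≤ d → Module.Projective (End T)ᵐᵒᵖ (T ⟶ C.obj i)) ∧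
    (∀ n, n + 1 ≤ d → Function.Exact (fun a : T ⟶ C.obj n => a ≫ C.hom n)
      (fun a : T ⟶ C.obj (n + 1) => a ≫ C.hom (n + 1))) ∧
    Function.Surjective (fun a : T ⟶ C.obj d => a ≫ C.hom d) := by
  refine ⟨?_, ?_, ?_, ?_⟩
  · intro g
    set e : End (C.obj (d + 1)) := C.conn ≫ g with he
    haveI : Module.Finite k (End (C.obj (d + 1))) := hfin _ _
    have hInt : IsIntegral k e := IsIntegral.of_finite k e
    have hidem : ∀ f : End (C.obj (d + 1)), f * f = f → f = 0 ∨ f = 1 := by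
      intro f hf
      exact hind.2 f hf
    rcases isUnit_or_isUnit_one_sub e hInt hidem with hu | hu
    · exfalso
      obtain ⟨a, ha⟩ := hnz
      obtain ⟨w, hw1, hw2⟩ := isUnit_iff_exists.mp hu
      apply ha
      have hew : e ≫ w = 𝟙 (C.obj (d + 1)) := hw2
      calc a = a ≫ 𝟙 (C.obj (d + 1)) := (Category.comp_id a).symm
        _ = a ≫ (e ≫ w) := by rw [hew]
        _ = (a ≫ C.conn) ≫ (g ≫ w) := by rw [he]; simp
        _ = 0 := by rw [hkill a]; exact Limits.zero_comp
    · obtain ⟨w, hw1, hw2⟩ := isUnit_iff_exists.mp hu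
      exact ⟨⟨w, hw2, hw1⟩⟩
  · intro i hi
    exact projective_hom_of_inAdd 𝒯 T (C.obj i) (hadd i hi)
  · intro n hn
    exact A.hom_exact C hC T n hn
  · intro b
    exact (A.hom_exact_last C hC T b).mp (hkill b)
end
end
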